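/- arXiv:1605.06295 — 11 statements merged into one kernel-verified Lean document; each statement's English description precedes it below -/
import Mathlib

section
/- Let A be a real 2×2 matrix with (tr A)² − 4 det A > 0 and det A > 0 (a linear vector field with a hyperbolic singularity of node type at the origin: two distinct real nonzero eigenvalues of the same sign). Then there exist a real orthogonal 2×2 matrix P, constants C > 0, E > 0, and φ ∈ ℝ with cos(2φ) > 0 (i.e. φ ∈ (−π/4, π/4) mod π) such that for every θ ∈ ℝ, (Pᵀ A P) applied to the vector (E·cos θ, sin θ) equals C·(E·cos(θ−φ), sin(θ+φ)). -/
/-!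
A rotation by a suitable angle equalises the diagonal entries, giving `!![a, b; c, a]` with the
same trace and determinant, so that `b c > 0` and `a² > b c`. Rescaling the first coordinate by
`E = √(b / c)` turns this matrix into `!![a, d; d, a]` with `d = c E`, and writing
`(a, d) = C (cos φ, sin φ)` yields the normal form, with `C² cos 2φ = a² - d² = det A > 0`.
-/

open Real Matrix

lemma exists_polar_form (x y : ℝ) :
    ∃ φ : ℝ, √(x ^ 2 + y ^ 2) * cos φ = x ∧ √(x ^ 2 + y ^ 2) * sin φ = y := by
  have hnorm : ‖(⟨x, y⟩ : ℂ)‖ = √(x ^ 2 + y ^ 2) := by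
    rw [Complex.norm_def, Complex.normSq_mk, ← sq, ← sq]
  exact ⟨Complex.arg ⟨x, y⟩, by rw [← hnorm, Complex.norm_mul_cos_arg],
    by rw [← hnorm, Complex.norm_mul_sin_arg]⟩

lemma exists_mul_cos_add_mul_sin_eq_zero (x y : ℝ) : ∃ u : ℝ, x * cos u + y * sin u = 0 := by
  obtain ⟨φ, hx, hy⟩ := exists_polar_form x y
  refine ⟨φ + π / 2, ?_⟩
  -- With `(x, y) = r (cos φ, sin φ)`, `x cos u + y sin u = r cos (u - φ)`.
  rw [cos_add_pi_div_two, sin_add_pi_div_two]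
  linear_combination sin φ * hx - cos φ * hy

section Orthogonal

variable {n R : Type*} [Fintype n] [DecidableEq n] [CommRing R]

lemma det_transpose_mul_mul_of_transpose_mul_self {P : Matrix n n R} (hP : Pᵀ * P = 1)
    (A : Matrix n n R) : (Pᵀ * A * P).det = A.det := by
  have hdetP : Pᵀ.det * P.det = 1 := by rw [← det_mul, hP, det_one]
  rw [det_mul, det_mul, mul_right_comm, hdetP, one_mul]

lemma trace_transpose_mul_mul_of_transpose_mul_self {P : Matrix n n R} (hP : Pᵀ * P = 1)
    (A : Matrix n n R) : (Pᵀ * A * P).trace = A.trace := by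
  rw [trace_mul_comm, ← Matrix.mul_assoc, mul_eq_one_comm.mp hP, Matrix.one_mul]

end Orthogonal

noncomputable def rotationMatrix (t : ℝ) : Matrix (Fin 2) (Fin 2) ℝ :=
  !![cos t, -sin t; sin t, cos t]

lemma rotationMatrix_transpose_mul_self (t : ℝ) :
    (rotationMatrix t)ᵀ * rotationMatrix t = 1 := by
  ext i j
  fin_cases i <;> fin_cases j <;> simp [rotationMatrix, mul_apply, ← sq, mul_comm]

lemma rotationMatrix_conj_diag_sub (A : Matrix (Fin 2) (Fin 2) ℝ) (t : ℝ) :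
    ((rotationMatrix t)ᵀ * A * rotationMatrix t) 0 0
        - ((rotationMatrix t)ᵀ * A * rotationMatrix t) 1 1
      = (A 0 0 - A 1 1) * cos (2 * t) + (A 0 1 + A 1 0) * sin (2 * t) := by
  simp only [rotationMatrix, mul_apply, transpose_apply, of_apply, cons_val', cons_val_zero,
    cons_val_fin_one, cons_val_one, Fin.sum_univ_two, cos_two_mul', sin_two_mul]
  ring

lemma exists_orthogonal_conj_diag_eq (A : Matrix (Fin 2) (Fin 2) ℝ) :
    ∃ P : Matrix (Fin 2) (Fin 2) ℝ, Pᵀ * P = 1 ∧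
      (Pᵀ * A * P) 0 0 = (Pᵀ * A * P) 1 1 := by
  obtain ⟨u, hu⟩ := exists_mul_cos_add_mul_sin_eq_zero (A 0 0 - A 1 1) (A 0 1 + A 1 0)
  refine ⟨rotationMatrix (u / 2), rotationMatrix_transpose_mul_self _, ?_⟩
  rw [← sub_eq_zero, rotationMatrix_conj_diag_sub, mul_div_cancel₀ u two_ne_zero, hu]

lemma exists_node_normal_form_of_diag_eq {a b c : ℝ} (hbc : 0 < b * c)
    (hdet : 0 < a ^ 2 - b * c) :
    ∃ C E φ : ℝ, 0 < C ∧ 0 < E ∧ 0 < cos (2 * φ) ∧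
      ∀ θ : ℝ, !![a, b; c, a] *ᵥ ![E * cos θ, sin θ]
        = C • ![E * cos (θ - φ), sin (θ + φ)] := by
  have hc : c ≠ 0 := by rintro rfl; simp at hbc
  obtain ⟨E, hE, hEb⟩ : ∃ E : ℝ, 0 < E ∧ c * E ^ 2 = b := by
    have hbdivc : 0 < b / c := by rw [show b / c = b * c / c ^ 2 by field_simp]; positivity
    exact ⟨√(b / c), sqrt_pos.2 hbdivc, by rw [sq_sqrt hbdivc.le]; field_simp⟩
  have hcE : (c * E) ^ 2 = b * c := by linear_combination c * hEb
  obtain ⟨φ, hCcos, hCsin⟩ := exists_polar_form a (c * E)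
  set C := √(a ^ 2 + (c * E) ^ 2)
  have hC : 0 < C := sqrt_pos.2 <| by
    rw [hcE]; exact add_pos_of_nonneg_of_pos (sq_nonneg a) hbc
  have hcos : C ^ 2 * cos (2 * φ) = a ^ 2 - b * c := by
    rw [cos_two_mul']
    linear_combination (C * cos φ + a) * hCcos - (C * sin φ + c * E) * hCsin - hcE
  refine ⟨C, E, φ, hC, hE, pos_of_mul_pos_right (hcos ▸ hdet) (sq_nonneg C), fun θ => ?_⟩
  rw [mulVec_fin_two, smul_vec2, smul_eq_mul, smul_eq_mul, cos_sub, sin_add]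
  refine vec2_eq ?_ ?_ <;>
    simp only [of_apply, cons_val', cons_val_zero, cons_val_fin_one, cons_val_one]
  · linear_combination -E * cos θ * hCcos - E * sin θ * hCsin - sin θ * hEb
  · linear_combination -sin θ * hCcos - cos θ * hCsin

/-- A real 2×2 matrix with two distinct real nonzero eigenvalues of the
same sign (node) admits an orthonormal basis in which it takes the node normal form. -/
theorem node_normal_form (A : Matrix (Fin 2) (Fin 2) ℝ)
    (hdisc : 0 < (A.trace) ^ 2 - 4 * A.det) (hdet : 0 < A.det) :
    ∃ (P : Matrix (Fin 2) (Fin 2) ℝ) (C E φ : ℝ),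
      Pᵀ * P = 1 ∧ 0 < C ∧ 0 < E ∧ 0 < cos (2 * φ) ∧
      ∀ θ : ℝ, (Pᵀ * A * P).mulVec ![E * cos θ, sin θ]
        = C • ![E * cos (θ - φ), sin (θ + φ)] := by
  obtain ⟨P, hP, hdiag⟩ := exists_orthogonal_conj_diag_eq A
  have htrace := trace_transpose_mul_mul_of_transpose_mul_self hP A
  have hdetB := det_transpose_mul_mul_of_transpose_mul_self hP A
  refine ⟨P, ?_⟩
  generalize Pᵀ * A * P = B at hdiag htrace hdetB ⊢
  rw [trace_fin_two, ← hdiag] at htrace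
  rw [det_fin_two, ← hdiag] at hdetB
  rw [← htrace, ← hdetB] at hdisc
  rw [← hdetB] at hdet
  obtain ⟨C, E, φ, hC, hE, hφ, hform⟩ := exists_node_normal_form_of_diag_eq
    (a := B 0 0) (b := B 0 1) (c := B 1 0) (by linarith) (by linarith)
  refine ⟨C, E, φ, hP, hC, hE, hφ, fun θ => ?_⟩
  rw [eta_fin_two B, ← hdiag]
  exact hform θ
end

section
/- Let A be a real 2×2 matrix with det A < 0 (a linear vector field with a hyperbolic singularity of saddle type at the origin). Then there exist a real orthogonal 2×2 matrix P, constants C > 0, E > 0, and φ ∈ ℝ with cos(2φ) < 0 (i.e. φ ∈ (π/4, 3π/4) mod π) such that for every θ ∈ ℝ, (Pᵀ A P) applied to the vector (E·cos θ, sin θ) equals C·(E·cos(θ−φ), sin(θ+φ)). -/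
/-!
A rotation by a suitable angle makes the two diagonal entries equal, and conjugating by
the reflection `diag(1, -1)` if necessary makes both off-diagonal entries positive, so `A` becomes
`!![a, b; c, a]` with `b, c > 0` and `a² - bc = det A < 0`. For such a matrix take
`E = √(b/c)` and write `(a, √(bc)) = C (cos φ, sin φ)`; then `C² cos 2φ = a² - bc < 0`.
-/

open Real Matrix

lemma exists_polar (x y : ℝ) : ∃ r s : ℝ, 0 ≤ r ∧ r * cos s = x ∧ r * sin s = y :=
  ⟨‖(⟨x, y⟩ : ℂ)‖, Complex.arg ⟨x, y⟩, norm_nonneg _,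
    Complex.norm_mul_cos_arg _, Complex.norm_mul_sin_arg _⟩

lemma det_transpose_mul_mul_of_orthogonal {n : Type*} [Fintype n] [DecidableEq n]
    {P : Matrix n n ℝ} (hP : Pᵀ * P = 1) (A : Matrix n n ℝ) : (Pᵀ * A * P).det = A.det := by
  have hdetP : P.det * P.det = 1 := by
    simpa only [det_mul, det_transpose, det_one] using congrArg det hP
  calc (Pᵀ * A * P).det = A.det * (P.det * P.det) := by
        rw [det_mul, det_mul, det_transpose]; ring
    _ = A.det := by rw [hdetP, mul_one]

lemma transpose_mul_self_mul {n : Type*} [Fintype n] [DecidableEq n] {P Q : Matrix n n ℝ}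
    (hP : Pᵀ * P = 1) (hQ : Qᵀ * Q = 1) : (P * Q)ᵀ * (P * Q) = 1 := by
  rw [transpose_mul, Matrix.mul_assoc, ← Matrix.mul_assoc Pᵀ, hP, Matrix.one_mul, hQ]

lemma exists_rotationMatrix_conj_diag_eq (A : Matrix (Fin 2) (Fin 2) ℝ) :
    ∃ t, ((rotationMatrix t)ᵀ * A * rotationMatrix t) 0 0
      = ((rotationMatrix t)ᵀ * A * rotationMatrix t) 1 1 := by
  obtain ⟨r, s, -, hx, hy⟩ := exists_polar (A 0 1 + A 1 0) (A 1 1 - A 0 0)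
  refine ⟨s / 2, sub_eq_zero.mp ?_⟩
  rw [rotationMatrix_conj_diag_sub, mul_div_cancel₀ s two_ne_zero, ← hx,
    show A 0 0 - A 1 1 = -(r * sin s) by rw [hy]; ring]
  ring

lemma exists_orthogonal_conj_eq_equal_diag (A : Matrix (Fin 2) (Fin 2) ℝ) :
    ∃ (P : Matrix (Fin 2) (Fin 2) ℝ) (a b c : ℝ), Pᵀ * P = 1 ∧ Pᵀ * A * P = !![a, b; c, a] := by
  obtain ⟨t, ht⟩ := exists_rotationMatrix_conj_diag_eq A
  exact ⟨rotationMatrix t, _, _, _, rotationMatrix_transpose_mul_self t,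
    (eta_fin_two _).trans (by rw [ht])⟩

lemma exists_orthogonal_conj_eq_pos_offdiag {A : Matrix (Fin 2) (Fin 2) ℝ} (hdet : A.det < 0) :
    ∃ (P : Matrix (Fin 2) (Fin 2) ℝ) (a b c : ℝ),
      Pᵀ * P = 1 ∧ 0 < b ∧ 0 < c ∧ a ^ 2 < b * c ∧ Pᵀ * A * P = !![a, b; c, a] := by
  obtain ⟨R, a, b, c, hR, hRA⟩ := exists_orthogonal_conj_eq_equal_diag A
  have habc : a ^ 2 < b * c := by
    have hdet' : a * a - b * c < 0 := by
      rwa [← det_fin_two_of, ← hRA, det_transpose_mul_mul_of_orthogonal hR]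
    linarith [sq a]
  rcases pos_and_pos_or_neg_and_neg_of_mul_pos (by nlinarith [sq_nonneg a] : 0 < b * c)
    with ⟨hb, hc⟩ | ⟨hb, hc⟩
  · exact ⟨R, a, b, c, hR, hb, hc, habc, hRA⟩
  · set S : Matrix (Fin 2) (Fin 2) ℝ := !![1, 0; 0, -1]
    have hS : Sᵀ * S = 1 := by
      ext i j; fin_cases i <;> fin_cases j <;> simp [S, mul_apply, Fin.sum_univ_two]
    refine ⟨R * S, a, -b, -c, transpose_mul_self_mul hR hS, neg_pos.2 hb, neg_pos.2 hc,
      by rwa [neg_mul_neg], ?_⟩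
    calc (R * S)ᵀ * A * (R * S) = Sᵀ * (Rᵀ * A * R) * S := by
          simp only [transpose_mul, Matrix.mul_assoc]
      _ = !![a, -b; -c, a] := by
          rw [hRA]; ext i j; fin_cases i <;> fin_cases j <;> simp [S, mul_apply, Fin.sum_univ_two]

lemma mulVec_cos_sin_eq_smul {a b c C E φ : ℝ} (ha : C * cos φ = a) (hb : C * E * sin φ = b)
    (hc : C * sin φ = c * E) (θ : ℝ) :
    !![a, b; c, a] *ᵥ ![E * cos θ, sin θ] = C • ![E * cos (θ - φ), sin (θ + φ)] := by
  subst ha hb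
  simp only [mulVec_fin_two, of_apply, cons_val', cons_val_zero, cons_val_one, cons_val_fin_one,
    smul_cons, smul_eq_mul, smul_empty, cos_sub, sin_add]
  congr 2
  · ring
  · linear_combination -cos θ * hc

lemma exists_saddle_normal_form_of_sq_lt_mul {a b c : ℝ} (hb : 0 < b) (hc : 0 < c)
    (habc : a ^ 2 < b * c) :
    ∃ C E φ : ℝ, 0 < C ∧ 0 < E ∧ cos (2 * φ) < 0 ∧
      ∀ θ : ℝ, !![a, b; c, a] *ᵥ ![E * cos θ, sin θ] = C • ![E * cos (θ - φ), sin (θ + φ)] := by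
  obtain ⟨C, φ, hC, ha, hs⟩ := exists_polar a (√b * √c)
  have hsb : √b ^ 2 = b := sq_sqrt hb.le
  have hsc : √c ^ 2 = c := sq_sqrt hc.le
  have hsc0 : 0 < √c := sqrt_pos.2 hc
  have hC : 0 < C := hC.lt_of_ne <| by
    rintro rfl
    rw [zero_mul] at hs
    exact (by positivity : 0 < √b * √c).ne hs
  have hcos : C ^ 2 * cos (2 * φ) = a ^ 2 - b * c := by
    rw [cos_two_mul', ← hsb, ← hsc, ← ha]
    linear_combination -(C * sin φ + √b * √c) * hs
  refine ⟨C, √b / √c, φ, hC, by positivity, neg_of_mul_neg_right (by linarith) (sq_nonneg C),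
    mulVec_cos_sin_eq_smul ha ?_ ?_⟩
  · rw [mul_right_comm, hs]
    field_simp
    exact hsb
  · rw [hs]
    field_simp
    exact hsc

/-- A real 2×2 matrix with negative determinant (saddle) admits an
orthonormal basis in which it takes the saddle normal form. -/
theorem saddle_normal_form (A : Matrix (Fin 2) (Fin 2) ℝ)
    (hdet : A.det < 0) :
    ∃ (P : Matrix (Fin 2) (Fin 2) ℝ) (C E φ : ℝ),
      Pᵀ * P = 1 ∧ 0 < C ∧ 0 < E ∧ cos (2 * φ) < 0 ∧
      ∀ θ : ℝ, (Pᵀ * A * P).mulVec ![E * cos θ, sin θ]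
        = C • ![E * cos (θ - φ), sin (θ + φ)] := by
  obtain ⟨P, a, b, c, hP, hb, hc, habc, hPA⟩ := exists_orthogonal_conj_eq_pos_offdiag hdet
  obtain ⟨C, E, φ, hC, hE, hφ, hform⟩ := exists_saddle_normal_form_of_sq_lt_mul hb hc habc
  exact ⟨P, C, E, φ, hP, hC, hE, hφ, hPA ▸ hform⟩
end

section
/- Let E > 0 and φ ∈ ℝ with cos(2φ) ≠ 0, so that the curve c(θ) = (E·cos(θ−φ), sin(θ+φ)) never vanishes. Let G : ℝ → ℝ be a differentiable function such that for every θ there exists ρ(θ) > 0 with c(θ) = ρ(θ)·(cos G(θ), sin G(θ)). Then for every θ ∈ ℝ, G′(θ) = E·cos(2φ) / (E²·cos²(θ−φ) + sin²(θ+φ)). -/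
open Real

/-!
Since `c(θ)` is a positive multiple of `(cos G(θ), sin G(θ))`, the function
`x sin G - y cos G` (with `c = (x, y)`) vanishes identically, so its derivative does too.
Multiplying that derivative by `ρ` gives `G' (x² + y²) = x y' - y x'`, and for the curve at hand
`x y' - y x' = E (cos (θ+φ) cos (θ-φ) + sin (θ+φ) sin (θ-φ)) = E cos 2φ`.
-/

theorem angle_lift_deriv_mul_sq_add_sq {x y G : ℝ → ℝ} {x' y' g θ ρ : ℝ}
    (hx : HasDerivAt x x' θ) (hy : HasDerivAt y y' θ) (hG : HasDerivAt G g θ)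
    (hcol : ∀ t, x t * sin (G t) = y t * cos (G t))
    (hxθ : x θ = ρ * cos (G θ)) (hyθ : y θ = ρ * sin (G θ)) :
    g * (x θ ^ 2 + y θ ^ 2) = x θ * y' - y θ * x' := by
  have hderiv := (hx.mul hG.sin).sub (hy.mul hG.cos)
  have hzero : HasDerivAt (fun t => x t * sin (G t) - y t * cos (G t)) 0 θ := by
    simpa only [hcol, sub_self] using hasDerivAt_const θ (0 : ℝ)
  have hF' := hderiv.unique hzero
  linear_combination ρ * hF' + (g * x θ - y') * hxθ + (x' + g * y θ) * hyθ

theorem angle_lift_deriv_eq_div {x y G : ℝ → ℝ} {x' y' g θ ρ : ℝ}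
    (hx : HasDerivAt x x' θ) (hy : HasDerivAt y y' θ) (hG : HasDerivAt G g θ)
    (hcol : ∀ t, x t * sin (G t) = y t * cos (G t)) (hρ : ρ ≠ 0)
    (hxθ : x θ = ρ * cos (G θ)) (hyθ : y θ = ρ * sin (G θ)) :
    g = (x θ * y' - y θ * x') / (x θ ^ 2 + y θ ^ 2) := by
  have hnormSq : x θ ^ 2 + y θ ^ 2 = ρ ^ 2 := by
    rw [hxθ, hyθ]
    linear_combination ρ ^ 2 * cos_sq_add_sin_sq (G θ)
  rw [eq_div_iff (by rw [hnormSq]; positivity)]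
  exact angle_lift_deriv_mul_sq_add_sq hx hy hG hcol hxθ hyθ

theorem deriv_angle_lift_node_curve_general (E φ : ℝ)
    (G : ℝ → ℝ) (hG : Differentiable ℝ G)
    (hlift : ∀ θ : ℝ, ∃ ρ > 0,
      E * cos (θ - φ) = ρ * cos (G θ) ∧ sin (θ + φ) = ρ * sin (G θ)) :
    ∀ θ : ℝ, deriv G θ
      = E * cos (2 * φ) / (E ^ 2 * cos (θ - φ) ^ 2 + sin (θ + φ) ^ 2) := by
  intro θ
  have hcol : ∀ t, E * cos (t - φ) * sin (G t) = sin (t + φ) * cos (G t) := by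
    intro t
    obtain ⟨ρ, -, hx, hy⟩ := hlift t
    rw [hx, hy]
    ring
  have hx : HasDerivAt (fun t => E * cos (t - φ)) (E * -sin (θ - φ)) θ := by
    simpa using ((hasDerivAt_id' θ).sub_const φ).cos.const_mul E
  have hy : HasDerivAt (fun t => sin (t + φ)) (cos (θ + φ)) θ := by
    simpa using ((hasDerivAt_id' θ).add_const φ).sin
  obtain ⟨ρ, hρ, hxθ, hyθ⟩ := hlift θ
  rw [angle_lift_deriv_eq_div hx hy (hG θ).hasDerivAt hcol hρ.ne' hxθ hyθ, mul_pow,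
    show 2 * φ = (θ + φ) - (θ - φ) by ring, cos_sub (θ + φ) (θ - φ)]
  ring

/-- A differentiable angle lift `G` of the curve
`θ ↦ (E cos (θ−φ), sin (θ+φ))` (`E > 0`, `cos 2φ ≠ 0`) satisfies
`G′(θ) = E cos 2φ / (E² cos² (θ−φ) + sin² (θ+φ))`. -/
theorem deriv_angle_lift_node_curve (E φ : ℝ) (hE : 0 < E) (hφ : cos (2 * φ) ≠ 0)
    (G : ℝ → ℝ) (hG : Differentiable ℝ G)
    (hlift : ∀ θ : ℝ, ∃ ρ > 0,
      E * cos (θ - φ) = ρ * cos (G θ) ∧ sin (θ + φ) = ρ * sin (G θ)) :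
    ∀ θ : ℝ, deriv G θ
      = E * cos (2 * φ) / (E ^ 2 * cos (θ - φ) ^ 2 + sin (θ + φ) ^ 2) :=
  deriv_angle_lift_node_curve_general E φ G hG hlift
end

section
/- Let E > 1 and φ ∈ ℝ. Set A = √(5 − 4·cos(2φ)) (which is positive), let Φ ∈ ℝ satisfy A·cos Φ = 2·cos(2φ) − 1 and A·sin Φ = 2·sin(2φ) (such Φ exists since (2cos 2φ − 1)² + (2 sin 2φ)² = 5 − 4cos 2φ), and set κ = (E² + 1) / (A·(E² − 1)), which is positive. Then for every θ ∈ ℝ: cos(2θ + Φ) + κ > 0 if and only if 2E/(E²·cos²θ + sin²θ) − E/(E²·cos²(θ+φ) + sin²(θ+φ)) > 0. -/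
open Real

/-- sign comparison for the focus normal form. -/
theorem focus_sign_comparison (E φ A Φ κ : ℝ) (hE : 1 < E)
    (hA : A = Real.sqrt (5 - 4 * cos (2 * φ)))
    (hΦcos : A * cos Φ = 2 * cos (2 * φ) - 1)
    (hΦsin : A * sin Φ = 2 * sin (2 * φ))
    (hκ : κ = (E ^ 2 + 1) / (A * (E ^ 2 - 1))) :
    0 < A ∧ 0 < κ ∧
    ∀ θ : ℝ,
      (0 < cos (2 * θ + Φ) + κ ↔
        0 < 2 * E / (E ^ 2 * cos θ ^ 2 + sin θ ^ 2)
          - E / (E ^ 2 * cos (θ + φ) ^ 2 + sin (θ + φ) ^ 2)) := by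
  have hc : cos (2 * φ) ≤ 1 := cos_le_one _
  have hApos : 0 < A := by
    rw [hA]; exact Real.sqrt_pos.2 (by linarith)
  have hE2 : (0:ℝ) < E ^ 2 - 1 := by nlinarith
  have hκpos : 0 < κ := by
    rw [hκ]; exact div_pos (by nlinarith) (by positivity)
  have hκA : κ * (A * (E ^ 2 - 1)) = E ^ 2 + 1 := by
    rw [hκ]; field_simp
  have hcΦ : A * cos Φ = 2 * (2 * cos φ ^ 2 - 1) - 1 := by
    rw [hΦcos, cos_two_mul]
  have hsΦ : A * sin Φ = 2 * (2 * sin φ * cos φ) := by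
    rw [hΦsin, sin_two_mul]
  refine ⟨hApos, hκpos, fun θ => ?_⟩
  have hEpos : (0:ℝ) < E := by linarith
  have hD1 : 0 < E ^ 2 * cos θ ^ 2 + sin θ ^ 2 := by
    nlinarith [sin_sq_add_cos_sq θ, sq_nonneg (cos θ)]
  have hD2 : 0 < E ^ 2 * cos (θ + φ) ^ 2 + sin (θ + φ) ^ 2 := by
    nlinarith [sin_sq_add_cos_sq (θ + φ), sq_nonneg (cos (θ + φ))]
  have key : 2 * (E ^ 2 * cos (θ + φ) ^ 2 + sin (θ + φ) ^ 2)
      - (E ^ 2 * cos θ ^ 2 + sin θ ^ 2)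
      = (A * (E ^ 2 - 1) / 2) * (cos (2 * θ + Φ) + κ) := by
    simp only [cos_add, sin_add, cos_two_mul, sin_two_mul]
    linear_combination (-(E ^ 2 - 1) / 2 * (2 * cos θ ^ 2 - 1)) * hcΦ
      + ((E ^ 2 - 1) * sin θ * cos θ) * hsΦ - (1 / 2) * hκA
      + (2 * E ^ 2 * sin φ ^ 2 + 2 * cos φ ^ 2 - 1) * sin_sq_add_cos_sq θ
      + (2 * E ^ 2 - 2 * (E ^ 2 - 1) * cos θ ^ 2) * sin_sq_add_cos_sq φ
  have hrw : 2 * E / (E ^ 2 * cos θ ^ 2 + sin θ ^ 2)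
      - E / (E ^ 2 * cos (θ + φ) ^ 2 + sin (θ + φ) ^ 2)
      = E * (2 * (E ^ 2 * cos (θ + φ) ^ 2 + sin (θ + φ) ^ 2)
          - (E ^ 2 * cos θ ^ 2 + sin θ ^ 2))
        / ((E ^ 2 * cos θ ^ 2 + sin θ ^ 2)
          * (E ^ 2 * cos (θ + φ) ^ 2 + sin (θ + φ) ^ 2)) := by
    field_simp
  rw [hrw, key]
  constructor
  · intro h
    exact div_pos (by positivity) (by positivity)
  · intro h
    have h1 : 0 < E * (A * (E ^ 2 - 1) / 2 * (cos (2 * θ + Φ) + κ)) :=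
      (div_pos_iff.mp h).resolve_right (fun hh => absurd hh.2 (not_lt.2 (le_of_lt (by positivity)))) |>.1
    have h2 : 0 < A * (E ^ 2 - 1) / 2 * (cos (2 * θ + Φ) + κ) :=
      mul_pos_iff.mp h1 |>.elim (fun x => x.2) (fun x => absurd x.1 (not_lt.2 hEpos.le))
    exact mul_pos_iff.mp h2 |>.elim (fun x => x.2)
      (fun x => absurd x.1 (not_lt.2 (by positivity)))
end

section
/- Let E > 0 and φ ∈ ℝ with cos(2φ) ≠ 0. Set A = √( (1/2)·(5 + 6E² + 5E⁴ − (3 + 10E² + 3E⁴)·cos(4φ)) ) and assume A > 0. Let Φ ∈ ℝ satisfy A·cos Φ = (E² − 1)·cos(2φ) and A·sin Φ = −2·(E² + 1)·sin(2φ) (such Φ exists since ((E²−1)cos 2φ)² + (2(E²+1)sin 2φ)² = A²), and set κ = (E² + 1)·(2 − cos(2φ)) / A, which is positive. Then for every θ ∈ ℝ: cos(2θ + Φ) + κ > 0 if and only if 2E/(E²·cos²θ + sin²θ) − E·cos(2φ)/(E²·cos²(θ−φ) + sin²(θ+φ)) > 0. -/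
open Real

private lemma pos_of_pos_mul' {a b : ℝ} (ha : 0 < a) (hab : 0 < a * b) : 0 < b := by
  by_contra hb
  push_neg at hb
  nlinarith

/-- sign comparison for the node normal form. -/
theorem node_sign_comparison (E φ A Φ κ : ℝ) (hE : 0 < E) (hφ : cos (2 * φ) ≠ 0)
    (hA : A = Real.sqrt ((1 / 2) *
      (5 + 6 * E ^ 2 + 5 * E ^ 4 - (3 + 10 * E ^ 2 + 3 * E ^ 4) * cos (4 * φ))))
    (hApos : 0 < A)
    (hΦcos : A * cos Φ = (E ^ 2 - 1) * cos (2 * φ))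
    (hΦsin : A * sin Φ = -2 * (E ^ 2 + 1) * sin (2 * φ))
    (hκ : κ = (E ^ 2 + 1) * (2 - cos (2 * φ)) / A) :
    0 < κ ∧
    ∀ θ : ℝ,
      (0 < cos (2 * θ + Φ) + κ ↔
        0 < 2 * E / (E ^ 2 * cos θ ^ 2 + sin θ ^ 2)
          - E * cos (2 * φ) / (E ^ 2 * cos (θ - φ) ^ 2 + sin (θ + φ) ^ 2)) := by
  have hcφ := cos_le_one (2 * φ)
  have hE2 : (0:ℝ) < E ^ 2 + 1 := by positivity
  have hκA : A * κ = (E ^ 2 + 1) * (2 - cos (2 * φ)) := by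
    rw [hκ]; field_simp
  have hκpos : 0 < κ := by
    rw [hκ]
    apply div_pos _ hApos
    nlinarith
  refine ⟨hκpos, fun θ => ?_⟩
  have hpy1 := sin_sq_add_cos_sq θ
  have hpy2 := sin_sq_add_cos_sq φ
  have hD1 : 0 < E ^ 2 * cos θ ^ 2 + sin θ ^ 2 := by
    rcases eq_or_ne (cos θ) 0 with hc | hc
    · rw [hc] at hpy1 ⊢; nlinarith
    · have h2 : 0 < cos θ ^ 2 := (sq_nonneg _).lt_of_ne (Ne.symm (pow_ne_zero 2 hc))
      nlinarith [sq_nonneg (sin θ), pow_pos hE 2]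
  have hsφ : sin (2 * φ) ^ 2 < 1 := by
    have h := sin_sq_add_cos_sq (2 * φ)
    have : 0 < cos (2 * φ) ^ 2 := (sq_nonneg _).lt_of_ne (Ne.symm (pow_ne_zero 2 hφ))
    linarith
  have hsum : 0 < sin (θ + φ) ^ 2 + cos (θ - φ) ^ 2 := by
    have e : sin (θ + φ) ^ 2 + cos (θ - φ) ^ 2 = 1 + sin (2 * θ) * sin (2 * φ) := by
      rw [sin_add, cos_sub, sin_two_mul θ, sin_two_mul φ]
      linear_combination (sin φ ^ 2 + cos φ ^ 2) * hpy1 + hpy2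
    rw [e]
    nlinarith [sq_nonneg (sin (2 * θ) + sin (2 * φ)), sin_sq_le_one (2 * θ)]
  have hD2 : 0 < E ^ 2 * cos (θ - φ) ^ 2 + sin (θ + φ) ^ 2 := by
    rcases eq_or_ne (cos (θ - φ)) 0 with hc | hc
    · rw [hc] at hsum ⊢; nlinarith
    · have h2 : 0 < cos (θ - φ) ^ 2 := (sq_nonneg _).lt_of_ne (Ne.symm (pow_ne_zero 2 hc))
      nlinarith [sq_nonneg (sin (θ + φ)), pow_pos hE 2]
  set D1 := E ^ 2 * cos θ ^ 2 + sin θ ^ 2 with hD1def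
  set D2 := E ^ 2 * cos (θ - φ) ^ 2 + sin (θ + φ) ^ 2 with hD2def
  -- key identity
  have hkey : A * (cos (2 * θ + Φ) + κ) = 2 * (2 * D2 - cos (2 * φ) * D1) := by
    have e1 : cos (2 * θ + Φ) = cos (2 * θ) * cos Φ - sin (2 * θ) * sin Φ := cos_add _ _
    have e2 : cos (2 * θ) = 2 * cos θ ^ 2 - 1 := cos_two_mul θ
    have e3 : sin (2 * θ) = 2 * sin θ * cos θ := sin_two_mul θ
    have e4 : cos (2 * φ) = 2 * cos φ ^ 2 - 1 := cos_two_mul φ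
    have e5 : sin (2 * φ) = 2 * sin φ * cos φ := sin_two_mul φ
    have e6 : cos (θ - φ) = cos θ * cos φ + sin θ * sin φ := cos_sub θ φ
    have e7 : sin (θ + φ) = sin θ * cos φ + cos θ * sin φ := sin_add θ φ
    have hmul : A * (cos (2 * θ + Φ) + κ) =
        cos (2 * θ) * (A * cos Φ) - sin (2 * θ) * (A * sin Φ) + A * κ := by
      rw [e1]; ring
    rw [hmul, hΦcos, hΦsin, hκA, hD1def, hD2def, e2, e3, e4, e5, e6, e7]
    linear_combination (4*E^2*cos φ^2 - 4*E^2 - 2 - 4*E^2*(sin φ^2 + cos φ^2 - 1)) * hpy1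
      + (4*E^2*cos θ^2 - 4*E^2 - 4*cos θ^2) * hpy2
  have hRHS : 2 * E / D1 - E * cos (2 * φ) / D2
      = E * (2 * D2 - cos (2 * φ) * D1) / (D1 * D2) := by
    field_simp
  rw [hRHS, div_pos_iff]
  constructor
  · intro h
    have h1 : 0 < 2 * D2 - cos (2 * φ) * D1 := by
      have := mul_pos hApos h
      rw [hkey] at this
      linarith
    exact Or.inl ⟨mul_pos hE h1, mul_pos hD1 hD2⟩
  · rintro (⟨h, -⟩ | ⟨-, h⟩)
    · have h1 : 0 < 2 * D2 - cos (2 * φ) * D1 := pos_of_pos_mul' hE h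
      have h2 : 0 < A * (cos (2 * θ + Φ) + κ) := by rw [hkey]; linarith
      exact pos_of_pos_mul' hApos h2
    · exact absurd (mul_pos hD1 hD2) (by linarith)
end

section
/- Let E > 0, let X : ℝ² → ℝ² be an invertible linear map (identifying values of X with complex numbers via (a,b) ↦ a + ib), and let α ∈ ℝ. Let F : ℝ → ℝ be a continuous angle lift of the curve θ ↦ (E·cos θ, sin θ), and let G : ℝ → ℝ be a continuous angle lift of the curve θ ↦ X(E·cos θ, sin θ). Then for θ₀ ∈ ℝ the following are equivalent: (i) there exists c > 0 such that X(cos θ₀, sin θ₀)·e^{iα} = c·e^{2iθ₀} (i.e. θ₀ is a fixed point of the bisecting direction φ_L of the linear proto-line-field (X, (cos α, sin α))); (ii) there exists θ₁ ∈ ℝ with θ₀ ≡ F(θ₁) (mod 2π) and 2F(θ₁) − G(θ₁) ≡ α (mod 2π). -/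
/-!
Everything is read off rays in the plane: `F θ` is an angle of the ray through
`(E cos θ, sin θ)`, `G θ` an angle of its image under `X`, and (i) says that `2 θ₀ - α` is an
angle of the ray through `X (cos θ₀, sin θ₀)`. As `θ ↦ (E cos θ, sin θ)` is a linear image of the
unit circle, some `θ₁` puts this point on the ray of `(cos θ₀, sin θ₀)`, and these `θ₁` are
exactly those with `F θ₁ ≡ θ₀`. For them linearity of `X` makes `G θ₁` an angle of the ray
through `X (cos θ₀, sin θ₀)`, so (i) becomes `G θ₁ + α ≡ 2 θ₀`, i.e. `2 F θ₁ - G θ₁ ≡ α`.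
-/

open Real

theorem Real.Angle.coe_eq_coe_iff_exists_int {a b : ℝ} :
    (a : Angle) = b ↔ ∃ k : ℤ, a = b + 2 * π * k := by
  simp only [Angle.angle_eq_iff_two_pi_dvd_sub, sub_eq_iff_eq_add']

theorem Complex.coe_arg_exp_mul_I (t : ℝ) : (arg (exp (t * I)) : Angle) = t := by
  simpa using Angle.arg_toCircle t

theorem Complex.exp_mul_I_eq_exp_mul_I_iff {a b : ℝ} :
    exp (a * I) = exp (b * I) ↔ (a : Angle) = b := by
  refine ⟨fun h => ?_, fun h => ?_⟩
  · rw [← coe_arg_exp_mul_I a, h, coe_arg_exp_mul_I]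
  · simpa using congrArg (fun θ : Angle => (θ.toCircle : ℂ)) h

theorem Complex.exists_pos_mul_exp_mul_I_eq_iff {ρ a b : ℝ} (hρ : 0 < ρ) :
    (∃ c : ℝ, 0 < c ∧ (ρ : ℂ) * exp (a * I) = c * exp (b * I)) ↔ (a : Angle) = b := by
  refine ⟨fun ⟨c, hc, h⟩ => ?_,
    fun h => ⟨ρ, hρ, by rw [exp_mul_I_eq_exp_mul_I_iff.2 h]⟩⟩
  have := congrArg (fun z => (arg z : Angle)) h
  simpa only [arg_real_mul _ hρ, arg_real_mul _ hc, coe_arg_exp_mul_I] using this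

theorem Complex.equivRealProdLm_symm_cos_sin (t : ℝ) :
    equivRealProdLm.symm (Real.cos t, Real.sin t) = exp (t * I) := by
  rw [equivRealProdLm_symm_apply, exp_mul_I, ofReal_cos, ofReal_sin]

theorem cos_sin_ne_zero (t : ℝ) : ((cos t, sin t) : ℝ × ℝ) ≠ 0 := by
  intro h
  have := sin_sq_add_cos_sq t
  simp_all [Prod.ext_iff]

theorem sameRay_cos_sin_iff {a b : ℝ} :
    SameRay ℝ ((cos a, sin a) : ℝ × ℝ) (cos b, sin b) ↔ (a : Angle) = b := by
  rw [← SameRay.sameRay_map_iff Complex.equivRealProdLm.symm,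
    Complex.equivRealProdLm_symm_cos_sin, Complex.equivRealProdLm_symm_cos_sin,
    Complex.sameRay_iff, ← Complex.arg_coe_angle_eq_iff,
    Complex.coe_arg_exp_mul_I, Complex.coe_arg_exp_mul_I]
  simp [Complex.exp_ne_zero]

theorem exists_sameRay_map_cos_sin (D : (ℝ × ℝ) ≃ₗ[ℝ] ℝ × ℝ) (p : ℝ × ℝ) :
    ∃ θ : ℝ, SameRay ℝ (D (cos θ, sin θ)) p := by
  set z := Complex.equivRealProdLm.symm (D.symm p)
  refine ⟨Complex.arg z, ?_⟩
  have hq : D.symm p = ‖z‖ • ((cos (Complex.arg z), sin (Complex.arg z)) : ℝ × ℝ) := by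
    apply Complex.equivRealProdLm.symm.injective
    rw [map_smul, Complex.equivRealProdLm_symm_cos_sin, Complex.real_smul,
      Complex.norm_mul_exp_arg_mul_I]
  have h := (SameRay.sameRay_nonneg_smul_right
    ((cos (Complex.arg z), sin (Complex.arg z)) : ℝ × ℝ) (norm_nonneg z)).map D.toLinearMap
  rwa [← hq, LinearEquiv.coe_coe, LinearEquiv.apply_symm_apply] at h

theorem sameRay_cos_sin_of_exists_pos {p : ℝ × ℝ} {t : ℝ}
    (h : ∃ r > 0, p.1 = r * cos t ∧ p.2 = r * sin t) : SameRay ℝ p (cos t, sin t) := by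
  obtain ⟨r, hr, h₁, h₂⟩ := h
  rw [show p = r • (cos t, sin t) from Prod.ext h₁ h₂]
  exact SameRay.sameRay_pos_smul_left _ hr

theorem exists_pos_mul_exp_eq_iff_of_sameRay {p : ℝ × ℝ} {t : ℝ} (hp : p ≠ 0)
    (h : SameRay ℝ p (cos t, sin t)) (α β : ℝ) :
    (∃ c : ℝ, 0 < c ∧ ((p.1 : ℂ) + p.2 * Complex.I) * Complex.exp (α * Complex.I)
        = c * Complex.exp (β * Complex.I)) ↔ ((t + α : ℝ) : Angle) = β := by
  obtain ⟨ρ, hρ, rfl⟩ := h.exists_pos_right hp (cos_sin_ne_zero t)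
  rw [← Complex.equivRealProdLm_symm_apply, map_smul, Complex.equivRealProdLm_symm_cos_sin,
    Complex.real_smul, mul_assoc, ← Complex.exp_add, ← add_mul, ← Complex.ofReal_add]
  exact Complex.exists_pos_mul_exp_mul_I_eq_iff hρ

theorem fixed_point_iff_lift_equation_general (E α : ℝ) (hE : 0 < E)
    (X : (ℝ × ℝ) ≃ₗ[ℝ] (ℝ × ℝ)) (F G : ℝ → ℝ)
    (hFlift : ∀ θ : ℝ, ∃ r > 0,
      E * cos θ = r * cos (F θ) ∧ sin θ = r * sin (F θ))
    (hGlift : ∀ θ : ℝ, ∃ ρ > 0,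
      (X (E * cos θ, sin θ)).1 = ρ * cos (G θ) ∧
      (X (E * cos θ, sin θ)).2 = ρ * sin (G θ))
    (θ₀ : ℝ) :
    (∃ c : ℝ, 0 < c ∧
      (((X (cos θ₀, sin θ₀)).1 : ℂ) + ((X (cos θ₀, sin θ₀)).2 : ℂ) * Complex.I)
          * Complex.exp ((α : ℂ) * Complex.I)
        = (c : ℂ) * Complex.exp ((2 * θ₀ : ℂ) * Complex.I)) ↔
    (∃ θ₁ : ℝ, (∃ k : ℤ, θ₀ = F θ₁ + 2 * π * k) ∧
      (∃ m : ℤ, 2 * F θ₁ - G θ₁ = α + 2 * π * m)) := by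
  let D : (ℝ × ℝ) ≃ₗ[ℝ] ℝ × ℝ :=
    (LinearEquiv.smulOfNeZero ℝ ℝ E hE.ne').prodCongr (LinearEquiv.refl ℝ ℝ)
  have hD_ne (θ : ℝ) : D (cos θ, sin θ) ≠ 0 := D.map_ne_zero_iff.2 (cos_sin_ne_zero θ)
  have hF (θ : ℝ) : SameRay ℝ (D (cos θ, sin θ)) (cos (F θ), sin (F θ)) :=
    sameRay_cos_sin_of_exists_pos (hFlift θ)
  have hX_ne : X (cos θ₀, sin θ₀) ≠ 0 := X.map_ne_zero_iff.2 (cos_sin_ne_zero θ₀)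
  have hX_ray (θ₁ : ℝ) (hθ₁ : (F θ₁ : Angle) = θ₀) :
      SameRay ℝ (X (cos θ₀, sin θ₀)) (cos (G θ₁), sin (G θ₁)) := by
    have h_ray : SameRay ℝ (D (cos θ₁, sin θ₁)) (cos θ₀, sin θ₀) :=
      (hF θ₁).trans (sameRay_cos_sin_iff.2 hθ₁) fun h => absurd h (cos_sin_ne_zero _)
    exact (h_ray.map X.toLinearMap).symm.trans
      (sameRay_cos_sin_of_exists_pos (hGlift θ₁))
      fun h => absurd h (X.map_ne_zero_iff.2 (hD_ne θ₁))
  have h_angle (θ₁ : ℝ) (hθ₁ : (F θ₁ : Angle) = θ₀) :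
      ((G θ₁ + α : ℝ) : Angle) = (2 * θ₀ : ℝ) ↔ ((2 * F θ₁ - G θ₁ : ℝ) : Angle) = α := by
    simp only [two_mul, Real.Angle.coe_add, Real.Angle.coe_sub, hθ₁]
    rw [sub_eq_iff_eq_add', eq_comm]
  rw [show (2 * θ₀ : ℂ) = ((2 * θ₀ : ℝ) : ℂ) by push_cast; rfl]
  simp only [← Real.Angle.coe_eq_coe_iff_exists_int]
  constructor
  · intro h
    obtain ⟨θ₁, hθ₁⟩ : ∃ θ₁, (F θ₁ : Angle) = θ₀ := by
      obtain ⟨θ₁, h_ray⟩ := exists_sameRay_map_cos_sin D (cos θ₀, sin θ₀)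
      exact ⟨θ₁, sameRay_cos_sin_iff.1
        ((hF θ₁).symm.trans h_ray fun h => absurd h (hD_ne θ₁))⟩
    exact ⟨θ₁, hθ₁.symm, (h_angle θ₁ hθ₁).1
      ((exists_pos_mul_exp_eq_iff_of_sameRay hX_ne (hX_ray θ₁ hθ₁) _ _).1 h)⟩
  · rintro ⟨θ₁, h₀, h⟩
    exact (exists_pos_mul_exp_eq_iff_of_sameRay hX_ne (hX_ray θ₁ h₀.symm) _ _).2
      ((h_angle θ₁ h₀.symm).2 h)

/-- characterization of fixed points of the bisecting direction of a
linear proto-line-field `(X, (cos α, sin α))` via angle lifts `F` and `G`. -/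
theorem fixed_point_iff_lift_equation (E α : ℝ) (hE : 0 < E)
    (X : (ℝ × ℝ) ≃ₗ[ℝ] (ℝ × ℝ)) (F G : ℝ → ℝ)
    (hFcont : Continuous F) (hGcont : Continuous G)
    (hFlift : ∀ θ : ℝ, ∃ r > 0,
      E * cos θ = r * cos (F θ) ∧ sin θ = r * sin (F θ))
    (hGlift : ∀ θ : ℝ, ∃ ρ > 0,
      (X (E * cos θ, sin θ)).1 = ρ * cos (G θ) ∧
      (X (E * cos θ, sin θ)).2 = ρ * sin (G θ))
    (θ₀ : ℝ) :
    (∃ c : ℝ, 0 < c ∧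
      (((X (cos θ₀, sin θ₀)).1 : ℂ) + ((X (cos θ₀, sin θ₀)).2 : ℂ) * Complex.I)
          * Complex.exp ((α : ℂ) * Complex.I)
        = (c : ℂ) * Complex.exp ((2 * θ₀ : ℂ) * Complex.I)) ↔
    (∃ θ₁ : ℝ, (∃ k : ℤ, θ₀ = F θ₁ + 2 * π * k) ∧
      (∃ m : ℤ, 2 * F θ₁ - G θ₁ = α + 2 * π * m)) :=
  fixed_point_iff_lift_equation_general E α hE X F G hFlift hGlift θ₀
end

section
/- Let h : ℝ → ℝ be continuous and strictly increasing with h(θ + π) = h(θ) + 3π for all θ ∈ ℝ. Then for every α ∈ ℝ there are exactly three θ ∈ [−π, π) such that h(θ) ≡ α (mod 2π). -/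
open Real

/-- if `h` is continuous, strictly increasing and `h(θ+π)=h(θ)+3π`,
then for every `α` there are exactly three `θ ∈ [−π, π)` with `h(θ) ≡ α (mod 2π)`. -/
theorem three_solutions_star_case (h : ℝ → ℝ) (hcont : Continuous h)
    (hmono : StrictMono h) (hper : ∀ θ : ℝ, h (θ + π) = h θ + 3 * π) :
    ∀ α : ℝ,
      {θ : ℝ | θ ∈ Set.Ico (-π) π ∧ ∃ k : ℤ, h θ = α + 2 * π * k}.ncard = 3 := by
  intro α
  have hπ : (0:ℝ) < π := pi_pos
  have h2π : (0:ℝ) < 2 * π := by linarith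
  have hπ6 : h π = h (-π) + 6 * π := by
    have h1 := hper (-π)
    have h2 := hper 0
    rw [neg_add_cancel] at h1
    rw [zero_add] at h2
    linarith
  set a := h (-π) with ha
  have hexists : ∀ y : ℝ, a ≤ y → y < a + 6 * π →
      ∃ θ, θ ∈ Set.Ico (-π) π ∧ h θ = y := by
    intro y hy1 hy2
    have hmem : y ∈ Set.Icc (h (-π)) (h π) := by
      rw [hπ6]; exact ⟨hy1, by linarith⟩
    obtain ⟨θ, hθmem, hθeq⟩ := intermediate_value_Icc (by linarith : (-π:ℝ) ≤ π)
      hcont.continuousOn hmem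
    refine ⟨θ, ⟨hθmem.1, ?_⟩, hθeq⟩
    have hlt : h θ < h π := by rw [hθeq, hπ6]; linarith
    exact hmono.lt_iff_lt.mp hlt
  set k0 : ℤ := ⌈(a - α) / (2 * π)⌉ with hk0
  have hk0l : a - α ≤ 2 * π * k0 := by
    have := Int.le_ceil ((a - α) / (2 * π))
    rw [div_le_iff₀ h2π] at this
    linarith
  have hk0u : 2 * π * k0 < a - α + 2 * π := by
    have h1 := Int.ceil_lt_add_one ((a - α) / (2 * π))
    rw [← hk0] at h1
    have h2 : (k0:ℝ) * (2 * π) < ((a - α) / (2 * π) + 1) * (2 * π) :=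
      mul_lt_mul_of_pos_right h1 h2π
    rw [add_mul, div_mul_cancel₀ _ (ne_of_gt h2π)] at h2
    linarith
  obtain ⟨θ0, hθ0, he0⟩ := hexists (α + 2 * π * k0) (by linarith) (by linarith)
  obtain ⟨θ1, hθ1, he1⟩ := hexists (α + 2 * π * ((k0:ℝ) + 1)) (by linarith)
    (by linarith)
  obtain ⟨θ2, hθ2, he2⟩ := hexists (α + 2 * π * ((k0:ℝ) + 2)) (by linarith)
    (by linarith)
  have hset : {θ : ℝ | θ ∈ Set.Ico (-π) π ∧ ∃ k : ℤ, h θ = α + 2 * π * k}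
      = {θ0, θ1, θ2} := by
    ext θ
    simp only [Set.mem_setOf_eq, Set.mem_insert_iff, Set.mem_singleton_iff]
    constructor
    · rintro ⟨hθ, k, hk⟩
      have hge : a ≤ h θ := hmono.monotone hθ.1
      have hlt : h θ < a + 6 * π := by
        have := hmono hθ.2
        rw [hπ6] at this; exact this
      have hkl : k0 ≤ k := by
        have h3 : 2 * π * (k0:ℝ) < 2 * π * ((k:ℝ) + 1) := by
          rw [hk] at hge; linarith
        have h4 : (k0:ℝ) < (k:ℝ) + 1 := lt_of_mul_lt_mul_left h3 (le_of_lt h2π)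
        have h5 : k0 < k + 1 := by exact_mod_cast h4
        omega
      have hku : k < k0 + 3 := by
        have h3 : 2 * π * (k:ℝ) < 2 * π * ((k0:ℝ) + 3) := by
          rw [hk] at hlt; linarith
        have h4 : (k:ℝ) < (k0:ℝ) + 3 := lt_of_mul_lt_mul_left h3 (le_of_lt h2π)
        exact_mod_cast h4
      have hcase : k = k0 ∨ k = k0 + 1 ∨ k = k0 + 2 := by omega
      rcases hcase with rfl | rfl | rfl
      · left
        exact hmono.injective (by rw [hk, he0])
      · right; left
        exact hmono.injective (by rw [hk, he1]; push_cast; ring)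
      · right; right
        exact hmono.injective (by rw [hk, he2]; push_cast; ring)
    · rintro (rfl | rfl | rfl)
      · exact ⟨hθ0, k0, he0⟩
      · exact ⟨hθ1, k0 + 1, by rw [he1]; push_cast; ring⟩
      · exact ⟨hθ2, k0 + 2, by rw [he2]; push_cast; ring⟩
  rw [hset]
  have h01 : θ0 < θ1 := hmono.lt_iff_lt.mp (by rw [he0, he1]; linarith)
  have h12 : θ1 < θ2 := hmono.lt_iff_lt.mp (by rw [he1, he2]; linarith)
  have h02 : θ0 < θ2 := h01.trans h12
  rw [Set.ncard_insert_of_notMem (by simp [h01.ne, h02.ne]),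
    Set.ncard_insert_of_notMem (by simp [h12.ne]), Set.ncard_singleton]
end

section
/- Let h : ℝ → ℝ be continuously differentiable with h(θ + π) = h(θ) + π for all θ, and suppose there exists x ∈ (0, π) such that h′ > 0 on (0, x) and h′ < 0 on (x, π), and that h(x) − h(0) ≤ 2π. Let α ∈ ℝ with α ≢ h(0) (mod π) and α ≢ h(x) (mod π). Then exactly one of the following holds: (1) there is exactly one congruence class mod 2π of solutions θ of h(θ) ≡ α (mod 2π), and h′(θ) > 0 at every such solution; or (2) there are exactly three congruence classes mod 2π of solutions, and they admit representatives θ₁ < θ₂ < θ₃ with θ₃ − θ₁ < π, h′(θ₁) > 0, h′(θ₂) < 0, and h′(θ₃) > 0. -/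
/-!
Since `h (θ + π) = h θ + π`, the graph of `h` over `[p, p + 2π]` consists of a unimodal arc over
`[p, p + π]` (rising from `h p` to its maximum `h q`, then falling to `h p + π`) followed by its
translate by `(π, π)`. Choosing the base point `p ∈ {0, -π}` so that the representative `y` of `α`
modulo `2π` lies in `(h p + π, h p + 2π)`, the bound `h q - h p ≤ 2π` keeps `h` on `[p, p + 2π)`
within a range where `h ≡ y (mod 2π)` forces `h = y`, so the solutions there are: the unique point of
the translated rising branch where `h = y`, together with, when `y < h q`, the two points of the
first arc where `h = y`. In the latter case `θ₃ - θ₁ < π` because `h (θ₁ + π) = y + π > h θ₃` on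
a rising branch.
-/

open Real Set

lemma Int.eq_zero_of_add_mul_mem_Icc {a c z : ℝ} {k : ℤ} (hz : z ∈ Ioo a (a + c))
    (hk : z + c * k ∈ Icc a (a + c)) : k = 0 := by
  have hc : 0 < c := by linarith [hz.1, hz.2]
  have hlt : (k : ℝ) < 1 := by
    by_contra! h1
    nlinarith [hz.1, hk.2]
  have hgt : (-1 : ℝ) < k := by
    by_contra! h1
    nlinarith [hz.2, hk.1]
  have : k < 1 := by exact_mod_cast hlt
  have : -1 < k := by exact_mod_cast hgt
  omega

section Equivariant

variable {h : ℝ → ℝ}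

lemma periodic_sub_id_of_add_pi (hper : ∀ θ, h (θ + π) = h θ + π) :
    Function.Periodic (fun θ => h θ - θ) π := fun θ => by
  simp only [hper]
  ring

lemma periodic_deriv_of_add_pi (hper : ∀ θ, h (θ + π) = h θ + π) :
    Function.Periodic (deriv h) π := fun θ => by
  rw [← deriv_comp_add_const, funext hper, deriv_add_const]

lemma map_sub_pi (hper : ∀ θ, h (θ + π) = h θ + π) (θ : ℝ) : h (θ - π) = h θ - π := by
  have := hper (θ - π)
  rw [sub_add_cancel] at this
  linarith

lemma map_add_two_pi_mul (hper : ∀ θ, h (θ + π) = h θ + π) (m : ℤ) (θ : ℝ) :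
    h (θ + 2 * π * m) = h θ + 2 * π * m := by
  have := ((periodic_sub_id_of_add_pi hper).int_mul (2 * m)) θ
  push_cast at this
  rw [show θ + 2 * π * m = θ + 2 * m * π by ring]
  linarith

lemma deriv_add_two_pi_mul (hper : ∀ θ, h (θ + π) = h θ + π) (m : ℤ) (θ : ℝ) :
    deriv h (θ + 2 * π * m) = deriv h θ := by
  have := ((periodic_deriv_of_add_pi hper).int_mul (2 * m)) θ
  push_cast at this
  rwa [show θ + 2 * π * m = θ + 2 * m * π by ring]

end Equivariant

def SolvesModTwoPi (h : ℝ → ℝ) (α θ : ℝ) : Prop := ∃ k : ℤ, h θ = α + 2 * π * k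

section Solutions

variable {h : ℝ → ℝ} {α θ : ℝ}

lemma solvesModTwoPi_of_eq (hθ : h θ = α) : SolvesModTwoPi h α θ := ⟨0, by simp [hθ]⟩

lemma solvesModTwoPi_sub_zsmul (n : ℤ) :
    SolvesModTwoPi h (α - n • (2 * π)) θ ↔ SolvesModTwoPi h α θ := by
  rw [zsmul_eq_mul]
  constructor
  · rintro ⟨k, hk⟩
    exact ⟨k - n, by push_cast; linarith⟩
  · rintro ⟨k, hk⟩
    exact ⟨k + n, by push_cast; linarith⟩

lemma solvesModTwoPi_add_two_pi_mul (hper : ∀ θ, h (θ + π) = h θ + π) (m : ℤ) :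
    SolvesModTwoPi h α (θ + 2 * π * m) ↔ SolvesModTwoPi h α θ := by
  rw [SolvesModTwoPi, SolvesModTwoPi, map_add_two_pi_mul hper]
  constructor
  · rintro ⟨k, hk⟩
    exact ⟨k - m, by push_cast; linarith⟩
  · rintro ⟨k, hk⟩
    exact ⟨k + m, by push_cast; linarith⟩

lemma sub_zsmul_ne_add_pi_mul {c : ℝ} (hα : ∀ k : ℤ, α ≠ c + π * k) (n k : ℤ) :
    α - n • (2 * π) ≠ c + π * k := by
  intro he
  apply hα (k + 2 * n)
  rw [zsmul_eq_mul] at he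
  push_cast
  linarith

end Solutions

structure UnimodalHalfPeriod (h : ℝ → ℝ) (p q : ℝ) : Prop where
  continuous : Continuous h
  add_pi : ∀ θ, h (θ + π) = h θ + π
  lt : p < q
  lt_add_pi : q < p + π
  deriv_pos : ∀ θ ∈ Ioo p q, 0 < deriv h θ
  deriv_neg : ∀ θ ∈ Ioo q (p + π), deriv h θ < 0
  sub_le : h q - h p ≤ 2 * π

namespace UnimodalHalfPeriod

variable {h : ℝ → ℝ} {p q y z θ : ℝ}

lemma sub_pi (hU : UnimodalHalfPeriod h p q) : UnimodalHalfPeriod h (p - π) (q - π) where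
  continuous := hU.continuous
  add_pi := hU.add_pi
  lt := by linarith [hU.lt]
  lt_add_pi := by linarith [hU.lt_add_pi]
  deriv_pos θ hθ := by
    rw [← periodic_deriv_of_add_pi hU.add_pi θ]
    exact hU.deriv_pos _ ⟨by linarith [hθ.1], by linarith [hθ.2]⟩
  deriv_neg θ hθ := by
    rw [← periodic_deriv_of_add_pi hU.add_pi θ]
    exact hU.deriv_neg _ ⟨by linarith [hθ.1], by linarith [hθ.2]⟩
  sub_le := by
    rw [map_sub_pi hU.add_pi, map_sub_pi hU.add_pi]
    linarith [hU.sub_le]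

lemma strictMonoOn (hU : UnimodalHalfPeriod h p q) : StrictMonoOn h (Icc p q) :=
  strictMonoOn_of_deriv_pos (convex_Icc p q) hU.continuous.continuousOn
    (by simpa only [interior_Icc] using hU.deriv_pos)

lemma strictAntiOn (hU : UnimodalHalfPeriod h p q) : StrictAntiOn h (Icc q (p + π)) :=
  strictAntiOn_of_deriv_neg (convex_Icc q (p + π)) hU.continuous.continuousOn
    (by simpa only [interior_Icc] using hU.deriv_neg)

lemma mapsTo_Icc_left (hU : UnimodalHalfPeriod h p q) : MapsTo h (Icc p q) (Icc (h p) (h q)) :=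
  fun _ hθ => ⟨hU.strictMonoOn.monotoneOn (left_mem_Icc.2 hU.lt.le) hθ hθ.1,
    hU.strictMonoOn.monotoneOn hθ (right_mem_Icc.2 hU.lt.le) hθ.2⟩

lemma mapsTo_Icc_right (hU : UnimodalHalfPeriod h p q) :
    MapsTo h (Icc q (p + π)) (Icc (h p + π) (h q)) := fun _ hθ =>
  ⟨hU.add_pi p ▸ hU.strictAntiOn.antitoneOn hθ (right_mem_Icc.2 hU.lt_add_pi.le) hθ.2,
    hU.strictAntiOn.antitoneOn (left_mem_Icc.2 hU.lt_add_pi.le) hθ hθ.1⟩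

lemma mapsTo_Icc (hU : UnimodalHalfPeriod h p q) : MapsTo h (Icc p (p + π)) (Icc (h p) (h q)) := by
  intro θ hθ
  rcases le_total θ q with hθq | hθq
  · exact hU.mapsTo_Icc_left ⟨hθ.1, hθq⟩
  · have := hU.mapsTo_Icc_right ⟨hθq, hθ.2⟩
    exact ⟨by linarith [this.1, pi_pos], this.2⟩

lemma add_pi_lt (hU : UnimodalHalfPeriod h p q) : h p + π < h q := by
  simpa only [hU.add_pi] using
    hU.strictAntiOn (left_mem_Icc.2 hU.lt_add_pi.le) (right_mem_Icc.2 hU.lt_add_pi.le) hU.lt_add_pi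

lemma one_preimage (hU : UnimodalHalfPeriod h p q) (hz : z ∈ Ioo (h p) (h p + π)) :
    ∃ t ∈ Ioo p q, h t = z ∧ ∀ s ∈ Icc p (p + π), h s = z → s = t := by
  obtain ⟨t, ht, rfl⟩ := intermediate_value_Ioo hU.lt.le hU.continuous.continuousOn
    ⟨hz.1, hz.2.trans hU.add_pi_lt⟩
  refine ⟨t, ht, rfl, fun s hs hst => ?_⟩
  rcases le_total s q with hsq | hsq
  · exact hU.strictMonoOn.injOn ⟨hs.1, hsq⟩ (Ioo_subset_Icc_self ht) hst
  · exact absurd hst (hz.2.trans_le (hU.mapsTo_Icc_right ⟨hsq, hs.2⟩).1).ne'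

lemma two_preimages (hU : UnimodalHalfPeriod h p q) (hz : z ∈ Ioo (h p + π) (h q)) :
    ∃ t₁ ∈ Ioo p q, ∃ t₂ ∈ Ioo q (p + π), h t₁ = z ∧ h t₂ = z ∧
      ∀ s ∈ Icc p (p + π), h s = z → s = t₁ ∨ s = t₂ := by
  obtain ⟨t₁, ht₁, rfl⟩ := intermediate_value_Ioo hU.lt.le hU.continuous.continuousOn
    ⟨(lt_add_of_pos_right _ pi_pos).trans hz.1, hz.2⟩
  obtain ⟨t₂, ht₂, he⟩ := intermediate_value_Ioo' hU.lt_add_pi.le hU.continuous.continuousOn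
    ⟨by rw [hU.add_pi]; exact hz.1, hz.2⟩
  refine ⟨t₁, ht₁, t₂, ht₂, rfl, he, fun s hs hst => ?_⟩
  rcases le_total s q with hsq | hsq
  · exact Or.inl (hU.strictMonoOn.injOn ⟨hs.1, hsq⟩ (Ioo_subset_Icc_self ht₁) hst)
  · exact Or.inr (hU.strictAntiOn.injOn ⟨hsq, hs.2⟩ (Ioo_subset_Icc_self ht₂) (hst.trans he.symm))

lemma eq_of_solvesModTwoPi (hU : UnimodalHalfPeriod h p q) (hz : z ∈ Ioo (h p) (h p + 2 * π))
    (hθ : θ ∈ Icc p (p + π)) (hsol : SolvesModTwoPi h z θ) : h θ = z := by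
  obtain ⟨k, hk⟩ := hsol
  have hrange := hU.mapsTo_Icc hθ
  rw [hk] at hrange
  rw [hk, Int.eq_zero_of_add_mul_mem_Icc hz ⟨hrange.1, by linarith [hrange.2, hU.sub_le]⟩]
  simp

lemma exists_of_solvesModTwoPi (hU : UnimodalHalfPeriod h p q)
    (hy : y ∈ Ioo (h p + π) (h p + 2 * π)) (hθ : SolvesModTwoPi h y θ) :
    ∃ m : ℤ, ∃ s ∈ Icc p (p + π),
      (h s = y ∧ θ = s + 2 * π * m) ∨ (h s = y - π ∧ θ = s + π + 2 * π * m) := by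
  obtain ⟨m, hm, -⟩ := existsUnique_sub_zsmul_mem_Ico two_pi_pos θ p
  set θ' := θ - m • (2 * π)
  have hθθ' : θ = θ' + 2 * π * m := by simp only [θ', zsmul_eq_mul]; ring
  rw [hθθ', solvesModTwoPi_add_two_pi_mul hU.add_pi] at hθ
  refine ⟨m, ?_⟩
  rcases lt_or_ge θ' (p + π) with hlt | hge
  · exact ⟨θ', ⟨hm.1, hlt.le⟩, Or.inl
      ⟨hU.eq_of_solvesModTwoPi ⟨by linarith [hy.1, pi_pos], hy.2⟩ ⟨hm.1, hlt.le⟩ hθ, hθθ'⟩⟩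
  · have hs : θ' - π ∈ Icc p (p + π) := ⟨by linarith, by linarith [hm.2]⟩
    have hsol : SolvesModTwoPi h (y - π) (θ' - π) := by
      obtain ⟨k, hk⟩ := hθ
      exact ⟨k, by rw [map_sub_pi hU.add_pi, hk]; ring⟩
    refine ⟨θ' - π, hs, Or.inr ⟨hU.eq_of_solvesModTwoPi ?_ hs hsol, by rw [hθθ']; ring⟩⟩
    exact ⟨by linarith [hy.1], by linarith [hy.2, pi_pos]⟩

lemma one_class (hU : UnimodalHalfPeriod h p q) (hy : y ∈ Ioo (h q) (h p + 2 * π)) :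
    (∃ θ₀, SolvesModTwoPi h y θ₀ ∧ ∀ θ, SolvesModTwoPi h y θ → ∃ m : ℤ, θ = θ₀ + 2 * π * m) ∧
      ∀ θ, SolvesModTwoPi h y θ → 0 < deriv h θ := by
  have hy' : y ∈ Ioo (h p + π) (h p + 2 * π) := ⟨hU.add_pi_lt.trans hy.1, hy.2⟩
  obtain ⟨t, ht, hty, huniq⟩ := hU.one_preimage (z := y - π)
    ⟨by linarith [hy'.1], by linarith [hy'.2]⟩
  have hclass : ∀ θ, SolvesModTwoPi h y θ → ∃ m : ℤ, θ = t + π + 2 * π * m := by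
    intro θ hθ
    obtain ⟨m, s, hs, ⟨hsy, -⟩ | ⟨hsy, rfl⟩⟩ := hU.exists_of_solvesModTwoPi hy' hθ
    · exact absurd hsy ((hU.mapsTo_Icc hs).2.trans_lt hy.1).ne
    · exact ⟨m, by rw [huniq s hs hsy]⟩
  refine ⟨⟨t + π, solvesModTwoPi_of_eq (by rw [hU.add_pi, hty]; ring), hclass⟩, fun θ hθ => ?_⟩
  obtain ⟨m, rfl⟩ := hclass θ hθ
  rw [deriv_add_two_pi_mul hU.add_pi, periodic_deriv_of_add_pi hU.add_pi]
  exact hU.deriv_pos t ht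

lemma three_classes (hU : UnimodalHalfPeriod h p q) (hy : y ∈ Ioo (h p + π) (h q)) :
    ∃ θ₁ θ₂ θ₃ : ℝ, θ₁ < θ₂ ∧ θ₂ < θ₃ ∧ θ₃ - θ₁ < π ∧
      SolvesModTwoPi h y θ₁ ∧ SolvesModTwoPi h y θ₂ ∧ SolvesModTwoPi h y θ₃ ∧
      0 < deriv h θ₁ ∧ deriv h θ₂ < 0 ∧ 0 < deriv h θ₃ ∧
      ∀ θ, SolvesModTwoPi h y θ →
        ∃ m : ℤ, θ = θ₁ + 2 * π * m ∨ θ = θ₂ + 2 * π * m ∨ θ = θ₃ + 2 * π * m := by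
  have hy' : y ∈ Ioo (h p + π) (h p + 2 * π) := ⟨hy.1, by linarith [hy.2, hU.sub_le]⟩
  obtain ⟨t₁, ht₁, t₂, ht₂, hy₁, hy₂, huniq₂⟩ := hU.two_preimages hy
  obtain ⟨t, ht, hty, huniq⟩ := hU.one_preimage (z := y - π)
    ⟨by linarith [hy'.1], by linarith [hy'.2]⟩
  have htt₁ : t < t₁ := (hU.strictMonoOn.lt_iff_lt (Ioo_subset_Icc_self ht)
    (Ioo_subset_Icc_self ht₁)).1 (by linarith [pi_pos])
  refine ⟨t₁, t₂, t + π, ht₁.2.trans ht₂.1, by linarith [ht₂.2, ht.1], by linarith,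
    solvesModTwoPi_of_eq hy₁, solvesModTwoPi_of_eq hy₂,
    solvesModTwoPi_of_eq (by rw [hU.add_pi, hty]; ring), hU.deriv_pos t₁ ht₁, hU.deriv_neg t₂ ht₂,
    by rw [periodic_deriv_of_add_pi hU.add_pi]; exact hU.deriv_pos t ht, fun θ hθ => ?_⟩
  obtain ⟨m, s, hs, ⟨hsy, rfl⟩ | ⟨hsy, rfl⟩⟩ := hU.exists_of_solvesModTwoPi hy' hθ
  · rcases huniq₂ s hs hsy with rfl | rfl
    · exact ⟨m, Or.inl rfl⟩
    · exact ⟨m, Or.inr (Or.inl rfl)⟩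
  · exact ⟨m, Or.inr (Or.inr (by rw [huniq s hs hsy]))⟩

lemma dichotomy (hU : UnimodalHalfPeriod h p q) (hy : y ∈ Ioo (h p + π) (h p + 2 * π))
    (hyq : y ≠ h q) :
    Xor
      ((∃ θ₀, SolvesModTwoPi h y θ₀ ∧ ∀ θ, SolvesModTwoPi h y θ → ∃ m : ℤ, θ = θ₀ + 2 * π * m) ∧
        ∀ θ, SolvesModTwoPi h y θ → 0 < deriv h θ)
      (∃ θ₁ θ₂ θ₃ : ℝ, θ₁ < θ₂ ∧ θ₂ < θ₃ ∧ θ₃ - θ₁ < π ∧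
        SolvesModTwoPi h y θ₁ ∧ SolvesModTwoPi h y θ₂ ∧ SolvesModTwoPi h y θ₃ ∧
        0 < deriv h θ₁ ∧ deriv h θ₂ < 0 ∧ 0 < deriv h θ₃ ∧
        ∀ θ, SolvesModTwoPi h y θ →
          ∃ m : ℤ, θ = θ₁ + 2 * π * m ∨ θ = θ₂ + 2 * π * m ∨ θ = θ₃ + 2 * π * m) := by
  rcases hyq.lt_or_gt with hlt | hgt
  · have hthree := hU.three_classes ⟨hy.1, hlt⟩
    refine Or.inr ⟨hthree, fun hone => ?_⟩
    obtain ⟨-, θ₂, -, -, -, -, -, hθ₂, -, -, hd₂, -⟩ := hthree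
    exact (hone.2 θ₂ hθ₂).not_gt hd₂
  · have hone := hU.one_class ⟨hgt, hy.2⟩
    refine Or.inl ⟨hone, ?_⟩
    rintro ⟨-, θ₂, -, -, -, -, -, hθ₂, -, -, hd₂, -⟩
    exact (hone.2 θ₂ hθ₂).not_gt hd₂

end UnimodalHalfPeriod

/-- counting of fixed points in the intermediate (Lemon vs Monstar)
case: either exactly one congruence class mod 2π of solutions of `h(θ) ≡ α (mod 2π)`,
all with `h′ > 0`, or exactly three classes with representatives
`θ₁ < θ₂ < θ₃`, `θ₃ − θ₁ < π`, with derivative signs `+`, `−`, `+`. -/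
theorem one_or_three_solutions_intermediate_case (h : ℝ → ℝ)
    (hC1 : ContDiff ℝ 1 h)
    (hper : ∀ θ : ℝ, h (θ + π) = h θ + π)
    (x : ℝ) (hx : x ∈ Set.Ioo 0 π)
    (hpos : ∀ θ ∈ Set.Ioo 0 x, 0 < deriv h θ)
    (hneg : ∀ θ ∈ Set.Ioo x π, deriv h θ < 0)
    (hbound : h x - h 0 ≤ 2 * π)
    (α : ℝ) (hα0 : ∀ k : ℤ, α ≠ h 0 + π * k) (hαx : ∀ k : ℤ, α ≠ h x + π * k) :
    Xor'
      ((∃ θ₀ : ℝ, (∃ k : ℤ, h θ₀ = α + 2 * π * k) ∧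
          ∀ θ : ℝ, (∃ k : ℤ, h θ = α + 2 * π * k) → ∃ m : ℤ, θ = θ₀ + 2 * π * m) ∧
        ∀ θ : ℝ, (∃ k : ℤ, h θ = α + 2 * π * k) → 0 < deriv h θ)
      (∃ θ₁ θ₂ θ₃ : ℝ, θ₁ < θ₂ ∧ θ₂ < θ₃ ∧ θ₃ - θ₁ < π ∧
        (∃ k : ℤ, h θ₁ = α + 2 * π * k) ∧
        (∃ k : ℤ, h θ₂ = α + 2 * π * k) ∧
        (∃ k : ℤ, h θ₃ = α + 2 * π * k) ∧
        0 < deriv h θ₁ ∧ deriv h θ₂ < 0 ∧ 0 < deriv h θ₃ ∧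
        ∀ θ : ℝ, (∃ k : ℤ, h θ = α + 2 * π * k) →
          ∃ m : ℤ, θ = θ₁ + 2 * π * m ∨ θ = θ₂ + 2 * π * m ∨ θ = θ₃ + 2 * π * m) := by
  have hU₀ : UnimodalHalfPeriod h 0 x :=
    ⟨hC1.continuous, hper, hx.1, by simpa using hx.2, hpos, by simpa using hneg, hbound⟩
  obtain ⟨n, hn, -⟩ := existsUnique_sub_zsmul_mem_Ico two_pi_pos α (h 0)
  set y := α - n • (2 * π)
  have hsol : ∀ θ, (∃ k : ℤ, h θ = α + 2 * π * k) ↔ SolvesModTwoPi h y θ :=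
    fun θ => (solvesModTwoPi_sub_zsmul n).symm
  have hy0 : ∀ k : ℤ, y ≠ h 0 + π * k := sub_zsmul_ne_add_pi_mul hα0 n
  have hyx : ∀ k : ℤ, y ≠ h x + π * k := sub_zsmul_ne_add_pi_mul hαx n
  obtain ⟨p, q, hU, hy, hyq⟩ : ∃ p q, UnimodalHalfPeriod h p q ∧
      y ∈ Ioo (h p + π) (h p + 2 * π) ∧ y ≠ h q := by
    have hlo : h 0 < y := hn.1.lt_of_ne (by simpa using (hy0 0).symm)
    rcases (by simpa using hy0 1 : y ≠ h 0 + π).lt_or_gt with hlow | hhigh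
    · refine ⟨0 - π, x - π, hU₀.sub_pi, ?_, ?_⟩
      · rw [map_sub_pi hper]
        exact ⟨by linarith, by linarith⟩
      · rw [map_sub_pi hper]
        simpa [sub_eq_add_neg] using hyx (-1)
    · exact ⟨0, x, hU₀, ⟨by simpa using hhigh, by simpa using hn.2⟩, by simpa using hyx 0⟩
  simp only [hsol]
  exact hU.dichotomy hy hyq
end

section
/- Identify ℝ² with ℂ. Let X : ℝ² → ℝ² be continuously differentiable with X(0) = 0 and DX(0) invertible, let Y : ℝ² → ℝ² be continuous with Y(0) ≠ 0, and let γ : (−1,1) → ℝ² be continuously differentiable with γ(0) = 0 and γ′(0) ≠ 0. For t ≠ 0 small (so that X(γ(t)) ≠ 0, Y(γ(t)) ≠ 0, γ′(t) ≠ 0), define δ(t) ∈ ℝ/πℤ as the image of arg(X(γ(t))) + arg(Y(γ(t))) − 2·arg(γ′(t)) ∈ ℝ/2πℤ under the halving homomorphism ℝ/2πℤ → ℝ/πℤ, x ↦ x/2 (the angle between the tangent γ′(t) and the line bisecting X(γ(t)) and Y(γ(t))). Then the one-sided limits lim_{t→0⁺} δ(t) and lim_{t→0⁻} δ(t) exist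 in ℝ/πℤ and lim_{t→0⁺} δ(t) = lim_{t→0⁻} δ(t) + π/2 in ℝ/πℤ. -/
open Real Filter

/-!
Write `δ = ½arg X(γ) + ½arg Y(γ) − arg γ'` in `ℝ/πℤ`, where `½arg` is `arg` followed by the
halving isomorphism `ℝ/2πℤ ≃ ℝ/πℤ`, continuous away from `0`. The last two terms are continuous
at `t = 0`. Since `X ∘ γ` vanishes at `0` with derivative `w = DX(0) γ'(0) ≠ 0`, `X(γ(t))` is a
positive multiple of `w` to first order for `t > 0` and of `-w` for `t < 0`, so `½arg X(γ(t))`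
tends to `½arg w` and `½arg (-w)` respectively; these differ by `π/2` because
`arg w ≡ arg (-w) + π (mod 2π)`.
-/

open Topology

noncomputable section

def halfArg (z : ℂ) : AddCircle π := ((Complex.arg z / 2 : ℝ) : AddCircle π)

def angleHalving : Real.Angle ≃+ AddCircle π :=
  AddCircle.equivAddCircle (2 * π) π two_pi_pos.ne' pi_ne_zero

theorem continuous_angleHalving : Continuous angleHalving :=
  (AddCircle.homeomorphAddCircle (2 * π) π two_pi_pos.ne' pi_ne_zero).continuous

theorem angleHalving_coe (x : ℝ) : angleHalving x = ((x / 2 : ℝ) : AddCircle π) := by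
  have h : angleHalving x = ((x * ((2 * π)⁻¹ * π) : ℝ) : AddCircle π) := rfl
  rw [h]
  congr 1
  field_simp

theorem continuousAt_halfArg {z : ℂ} (hz : z ≠ 0) : ContinuousAt halfArg z := by
  rw [show halfArg = fun w => angleHalving (Complex.arg w) from
    funext fun w => (angleHalving_coe _).symm]
  exact continuous_angleHalving.continuousAt.comp (Complex.continuousAt_arg_coe_angle hz)

theorem halfArg_real_smul {r : ℝ} (hr : 0 < r) (z : ℂ) : halfArg (r • z) = halfArg z := by
  rw [halfArg, halfArg, Complex.real_smul, Complex.arg_real_mul z hr]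

theorem halfArg_neg_add_pi_div_two {z : ℂ} (hz : z ≠ 0) :
    halfArg (-z) + ((π / 2 : ℝ) : AddCircle π) = halfArg z := by
  have h := Complex.arg_neg_coe_angle (neg_ne_zero.2 hz)
  rw [neg_neg] at h
  rw [halfArg, halfArg, ← angleHalving_coe, ← angleHalving_coe, ← angleHalving_coe, h, map_add]

theorem coe_arg_add_arg_sub_two_mul_arg_div_two (x y v : ℂ) :
    (((Complex.arg x + Complex.arg y - 2 * Complex.arg v) / 2 : ℝ) : AddCircle π) =
      halfArg x + (halfArg y - 2 • halfArg v) := by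
  rw [halfArg, halfArg, halfArg, ← AddCircle.coe_nsmul, ← AddCircle.coe_sub, ← AddCircle.coe_add]
  congr 1
  simp only [nsmul_eq_mul]
  ring

section OneSided

variable {f : ℝ → ℂ} {w : ℂ} {t₀ : ℝ}

theorem tendsto_halfArg_nhdsGT_of_hasDerivAt (hf : HasDerivAt f w t₀) (hf₀ : f t₀ = 0)
    (hw : w ≠ 0) : Tendsto (fun t => halfArg (f t)) (𝓝[>] t₀) (𝓝 (halfArg w)) := by
  have hslope := (hasDerivAt_iff_tendsto_slope.1 hf).mono_left
    (nhdsWithin_mono t₀ fun t (ht : t₀ < t) => ht.ne')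
  refine ((continuousAt_halfArg hw).tendsto.comp hslope).congr' ?_
  filter_upwards [self_mem_nhdsWithin] with t (ht : t₀ < t)
  rw [Function.comp_apply, slope_def_module, hf₀, sub_zero,
    halfArg_real_smul (inv_pos.2 (sub_pos.2 ht))]

theorem tendsto_halfArg_nhdsLT_of_hasDerivAt (hf : HasDerivAt f w t₀) (hf₀ : f t₀ = 0)
    (hw : w ≠ 0) : Tendsto (fun t => halfArg (f t)) (𝓝[<] t₀) (𝓝 (halfArg (-w))) := by
  have hslope := (hasDerivAt_iff_tendsto_slope.1 hf).mono_left
    (nhdsWithin_mono t₀ fun t (ht : t < t₀) => ht.ne)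
  refine ((continuousAt_halfArg (neg_ne_zero.2 hw)).tendsto.comp hslope.neg).congr' ?_
  filter_upwards [self_mem_nhdsWithin] with t (ht : t < t₀)
  rw [Function.comp_apply, slope_def_module, hf₀, sub_zero, ← neg_smul, ← inv_neg, neg_sub,
    halfArg_real_smul (inv_pos.2 (sub_pos.2 ht))]

end OneSided

end

/-- the angle (in ℝ/πℤ) between a C¹ curve through a hyperbolic
singularity of a proto-line-field and the bisecting line field jumps by π/2
across the singularity. -/
theorem bisecting_angle_jump (X Y : ℂ → ℂ) (γ : ℝ → ℂ)
    (hX : ContDiff ℝ 1 X) (hX0 : X 0 = 0)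
    (hDX : Function.Bijective (fderiv ℝ X 0))
    (hY : Continuous Y) (hY0 : Y 0 ≠ 0)
    (hγ : ContDiffOn ℝ 1 γ (Set.Ioo (-1) 1)) (hγ0 : γ 0 = 0)
    (hγ' : deriv γ 0 ≠ 0) :
    ∃ Lm : AddCircle (π : ℝ),
      Tendsto (fun t : ℝ =>
          (((Complex.arg (X (γ t)) + Complex.arg (Y (γ t))
            - 2 * Complex.arg (deriv γ t)) / 2 : ℝ) : AddCircle (π : ℝ)))
        (nhdsWithin 0 (Set.Iio 0)) (nhds Lm) ∧
      Tendsto (fun t : ℝ =>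
          (((Complex.arg (X (γ t)) + Complex.arg (Y (γ t))
            - 2 * Complex.arg (deriv γ t)) / 2 : ℝ) : AddCircle (π : ℝ)))
        (nhdsWithin 0 (Set.Ioi 0)) (nhds (Lm + ((π / 2 : ℝ) : AddCircle (π : ℝ)))) := by
  have hI : Set.Ioo (-1 : ℝ) 1 ∈ 𝓝 0 := Ioo_mem_nhds (by norm_num) (by norm_num)
  have hγd : HasDerivAt γ (deriv γ 0) 0 :=
    ((hγ.differentiableOn one_ne_zero).differentiableAt hI).hasDerivAt
  have hXγ : HasDerivAt (X ∘ γ) (fderiv ℝ X 0 (deriv γ 0)) 0 := by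
    have h := (hX.differentiable one_ne_zero (γ 0)).hasFDerivAt.comp_hasDerivAt 0 hγd
    rwa [hγ0] at h
  have hw : fderiv ℝ X 0 (deriv γ 0) ≠ 0 := by
    simpa only [map_zero] using hDX.injective.ne hγ'
  have hXγ₀ : (X ∘ γ) 0 = 0 := by rw [Function.comp_apply, hγ0, hX0]
  have hYγ : ContinuousAt (fun t => halfArg (Y (γ t))) 0 :=
    (continuousAt_halfArg (by rwa [hγ0])).comp
      (hY.continuousAt.comp hγd.continuousAt)
  have hγ'c : ContinuousAt (fun t => halfArg (deriv γ t)) 0 :=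
    (continuousAt_halfArg hγ').comp
      ((hγ.continuousOn_deriv_of_isOpen isOpen_Ioo le_rfl).continuousAt hI)
  have hrest := hYγ.sub (hγ'c.nsmul 2)
  simp only [coe_arg_add_arg_sub_two_mul_arg_div_two]
  refine ⟨halfArg (-fderiv ℝ X 0 (deriv γ 0)) +
      (halfArg (Y (γ 0)) - 2 • halfArg (deriv γ 0)),
    (tendsto_halfArg_nhdsLT_of_hasDerivAt hXγ hXγ₀ hw).add
      (hrest.tendsto.mono_left nhdsWithin_le_nhds), ?_⟩
  rw [add_right_comm, halfArg_neg_add_pi_div_two hw]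
  exact (tendsto_halfArg_nhdsGT_of_hasDerivAt hXγ hXγ₀ hw).add
    (hrest.tendsto.mono_left nhdsWithin_le_nhds)
end

section
/- Let φ̃ : ℝ × ℝ → ℝ be continuously differentiable and define P : ℝ × ℝ → ℝ² by P(r,θ) = (r·cos(φ̃(r,θ) − θ), sin(φ̃(r,θ) − θ)). Suppose P(0,θ₀) = 0 (equivalently sin(φ̃(0,θ₀) − θ₀) = 0) and ∂_r φ̃(0,θ₀) = 0. Then the Jacobian matrix of P at (0,θ₀) equals cos(φ̃(0,θ₀) − θ₀) · [[1, 0], [0, ∂_θ φ̃(0,θ₀) − 1]], where cos(φ̃(0,θ₀) − θ₀) = ±1; in particular det DP(0,θ₀) = ∂_θ φ̃(0,θ₀) − 1, so that the singularity (0,θ₀) of P is a hyperbolic saddle (eigenvalues of opposite signs) if ∂_θ φ̃(0,θ₀) < 1 and a node (two real eigenvalues of the same sign) if ∂_θ φ̃(0,θ₀) > 1. -/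
open Real

/-!
On the line `r = 0` the factor `r` kills every term of `∂(r cos(φ̃ - θ))` except
`cos(φ̃ - θ) dr`, so the Jacobian of `P` there is `cos(φ̃ - θ) · [[1, 0], [∂_r φ̃, ∂_θ φ̃ - 1]]`.
At a zero of `P` the sine vanishes, so the cosine is `±1`; with `∂_r φ̃ = 0` the Jacobian is
diagonal, its determinant is `∂_θ φ̃ - 1`, and the signs of its eigenvalues `c` and
`c (∂_θ φ̃ - 1)` follow from `c ≠ 0`.
-/

section Signs

variable {α : Type*} [Ring α] [LinearOrder α] [IsStrictOrderedRing α] {c x : α}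

theorem pos_and_mul_neg_or_neg_and_mul_pos (hc : c ≠ 0) (hx : x < 0) :
    (0 < c ∧ c * x < 0) ∨ (c < 0 ∧ 0 < c * x) := by
  rcases hc.lt_or_gt with hneg | hpos
  · exact Or.inr ⟨hneg, mul_pos_of_neg_of_neg hneg hx⟩
  · exact Or.inl ⟨hpos, mul_neg_of_pos_of_neg hpos hx⟩

theorem pos_and_mul_pos_or_neg_and_mul_neg (hc : c ≠ 0) (hx : 0 < x) :
    (0 < c ∧ 0 < c * x) ∨ (c < 0 ∧ c * x < 0) := by
  rcases hc.lt_or_gt with hneg | hpos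
  · exact Or.inr ⟨hneg, mul_neg_of_neg_of_pos hneg hx⟩
  · exact Or.inl ⟨hpos, mul_pos hpos hx⟩

end Signs

noncomputable def blowupField (φ : ℝ × ℝ → ℝ) (p : ℝ × ℝ) : ℝ × ℝ :=
  (p.1 * cos (φ p - p.2), sin (φ p - p.2))

open ContinuousLinearMap in
theorem hasFDerivAt_blowupField {φ : ℝ × ℝ → ℝ} {L : ℝ × ℝ →L[ℝ] ℝ} {p : ℝ × ℝ}
    (h : HasFDerivAt φ L p) :
    HasFDerivAt (blowupField φ)
      ((p.1 • (-sin (φ p - p.2)) • (L - snd ℝ ℝ ℝ) + cos (φ p - p.2) • fst ℝ ℝ ℝ).prod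
        (cos (φ p - p.2) • (L - snd ℝ ℝ ℝ))) p := by
  have hangle : HasFDerivAt (fun q : ℝ × ℝ => φ q - q.2) (L - snd ℝ ℝ ℝ) p :=
    h.sub hasFDerivAt_snd
  exact (hasFDerivAt_fst.mul hangle.cos).prodMk hangle.sin

theorem fderiv_blowupField_zero_apply {φ : ℝ × ℝ → ℝ} {θ : ℝ}
    (h : DifferentiableAt ℝ φ (0, θ)) (v : ℝ × ℝ) :
    fderiv ℝ (blowupField φ) (0, θ) v =
      (cos (φ (0, θ) - θ) * v.1, cos (φ (0, θ) - θ) * (fderiv ℝ φ (0, θ) v - v.2)) := by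
  rw [(hasFDerivAt_blowupField h.hasFDerivAt).fderiv]
  simp

/-- the Jacobian of the blown-up vector field
`P(r,θ) = (r cos(φ̃(r,θ) − θ), sin(φ̃(r,θ) − θ))` at a singularity `(0,θ₀)` with
`∂_r φ̃(0,θ₀) = 0` is `cos(φ̃(0,θ₀) − θ₀) · diag(1, ∂_θ φ̃(0,θ₀) − 1)` with
`cos(φ̃(0,θ₀) − θ₀) = ±1`; its determinant is `∂_θ φ̃(0,θ₀) − 1`, so the
singularity is a saddle if `∂_θ φ̃(0,θ₀) < 1` and a node if `∂_θ φ̃(0,θ₀) > 1`. -/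
theorem blowup_jacobian_at_singularity (phi : ℝ × ℝ → ℝ) (hphi : ContDiff ℝ 1 phi)
    (P : ℝ × ℝ → ℝ × ℝ)
    (hP : ∀ p : ℝ × ℝ, P p = (p.1 * cos (phi p - p.2), sin (phi p - p.2)))
    (θ₀ : ℝ)
    (hsing : sin (phi (0, θ₀) - θ₀) = 0)
    (hr : fderiv ℝ phi (0, θ₀) (1, 0) = 0)
    (c d : ℝ)
    (hc : c = cos (phi (0, θ₀) - θ₀))
    (hd : d = fderiv ℝ phi (0, θ₀) (0, 1)) :
    (c = 1 ∨ c = -1) ∧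
    fderiv ℝ P (0, θ₀) (1, 0) = (c, 0) ∧
    fderiv ℝ P (0, θ₀) (0, 1) = (0, c * (d - 1)) ∧
    -- the determinant of the Jacobian is ∂_θ φ̃(0,θ₀) − 1
    c * (c * (d - 1)) = d - 1 ∧
    -- saddle: eigenvalues c and c(d−1) of opposite signs when d < 1
    (d < 1 → (0 < c ∧ c * (d - 1) < 0) ∨ (c < 0 ∧ 0 < c * (d - 1))) ∧
    -- node: eigenvalues c and c(d−1) of the same sign when d > 1
    (1 < d → (0 < c ∧ 0 < c * (d - 1)) ∨ (c < 0 ∧ c * (d - 1) < 0)) := by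
  have hPeq : P = blowupField phi := funext hP
  have hdiff : DifferentiableAt ℝ phi (0, θ₀) := hphi.differentiable one_ne_zero _
  have hc1 : c = 1 ∨ c = -1 := hc ▸ sin_eq_zero_iff_cos_eq.mp hsing
  have hcc : c * c = 1 := by rcases hc1 with rfl | rfl <;> norm_num
  have hc0 : c ≠ 0 := left_ne_zero_of_mul_eq_one hcc
  refine ⟨hc1, ?_, ?_, by rw [← mul_assoc, hcc, one_mul],
    fun hd1 => pos_and_mul_neg_or_neg_and_mul_pos hc0 (sub_neg.mpr hd1),
    fun hd1 => pos_and_mul_pos_or_neg_and_mul_neg hc0 (sub_pos.mpr hd1)⟩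
  · rw [hPeq, fderiv_blowupField_zero_apply hdiff, hr, ← hc]
    simp
  · rw [hPeq, fderiv_blowupField_zero_apply hdiff, ← hd, ← hc]
    simp
end

section
/- Let λ > 0 and let F_λ : ℝ → ℝ be the continuous function with F_λ(0) = 0 such that for all θ ∈ ℝ there exists c(θ) > 0 with (cos θ, λ·sin θ) = c(θ)·(cos F_λ(θ), sin F_λ(θ)) (so tan F_λ(θ) = λ·tan θ wherever cos θ ≠ 0; F_λ is the angle, with respect to the metric g_λ = dx² + λ²dy², of the radial vector field X(x,y) = (x,y) at the point (cos θ, sin θ)). Then: (i) F_λ is differentiable with F_λ′(0) = λ; and (ii) if 0 < λ < 2, then θ = 0 is the unique θ ∈ (−π, π] satisfying F_λ(θ) ≡ 2θ (mod 2π). -/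
/-!
The relative angle `F θ - θ` between the image `(cos θ, λ sin θ)` and the point `(cos θ, sin θ)`
satisfies `c cos (F θ - θ) = cos² θ + λ sin² θ > 0`, so it never crosses `±π/2`; starting at `0`,
it stays in `(-π/2, π/2)`. There it equals the arctangent of
`(λ - 1) sin θ cos θ / (cos² θ + λ sin² θ)`, which gives `F` in closed form, hence its
smoothness and `F'(0) = 1 + (λ - 1) = λ`. A solution of `F θ = 2θ + 2πk` in `(-π, π]` then has
`k = 0` and `F θ - θ = θ`; the two identities force `sin θ ((2 - λ) cos² θ + λ sin² θ) = 0`,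
and for `0 < λ < 2` the second factor is positive, so `θ = 0`.
-/

open Real

def IsAngleLift (lam : ℝ) (F : ℝ → ℝ) : Prop :=
  ∀ θ : ℝ, ∃ c > 0, cos θ = c * cos (F θ) ∧ lam * sin θ = c * sin (F θ)

noncomputable def angleLift (lam θ : ℝ) : ℝ :=
  θ + arctan ((lam - 1) * sin θ * cos θ / (cos θ ^ 2 + lam * sin θ ^ 2))

section Trigonometry

variable {lam θ φ c : ℝ}

lemma mul_cos_sub_eq (h₁ : cos θ = c * cos φ) (h₂ : lam * sin θ = c * sin φ) :
    c * cos (φ - θ) = cos θ ^ 2 + lam * sin θ ^ 2 := by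
  rw [cos_sub]
  linear_combination (-cos θ) * h₁ - sin θ * h₂

lemma mul_sin_sub_eq (h₁ : cos θ = c * cos φ) (h₂ : lam * sin θ = c * sin φ) :
    c * sin (φ - θ) = (lam - 1) * sin θ * cos θ := by
  rw [sin_sub]
  linear_combination sin θ * h₁ - cos θ * h₂

lemma mul_cos_sq_add_mul_sin_sq_pos {a b : ℝ} (ha : 0 < a) (hb : 0 < b) (θ : ℝ) :
    0 < a * cos θ ^ 2 + b * sin θ ^ 2 := by
  nlinarith [sin_sq_add_cos_sq θ, lt_min ha hb,
    mul_nonneg (sub_nonneg.2 (min_le_left a b)) (sq_nonneg (cos θ)),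
    mul_nonneg (sub_nonneg.2 (min_le_right a b)) (sq_nonneg (sin θ))]

lemma cos_sq_add_mul_sin_sq_pos (hlam : 0 < lam) (θ : ℝ) : 0 < cos θ ^ 2 + lam * sin θ ^ 2 := by
  simpa using mul_cos_sq_add_mul_sin_sq_pos one_pos hlam θ

lemma eq_arctan_of_mul_cos_of_mul_sin {a b : ℝ} (hc : 0 < c) (hθ : |θ| < π / 2)
    (ha : c * cos θ = a) (hb : c * sin θ = b) : θ = arctan (b / a) := by
  rw [← ha, ← hb, mul_div_mul_left _ _ hc.ne', ← tan_eq_sin_div_cos,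
    arctan_tan (abs_lt.1 hθ).1 (abs_lt.1 hθ).2]

lemma eq_zero_of_cos_eq_mul_cos_two_mul (hlam : 0 < lam) (hlam₂ : lam < 2) (hθ : |θ| < π)
    (h₁ : cos θ = c * cos (2 * θ)) (h₂ : lam * sin θ = c * sin (2 * θ)) : θ = 0 := by
  have hc := mul_cos_sub_eq h₁ h₂
  have hs := mul_sin_sub_eq h₁ h₂
  rw [show 2 * θ - θ = θ by ring] at hc hs
  have hprod : sin θ * ((2 - lam) * cos θ ^ 2 + lam * sin θ ^ 2) = 0 := by
    linear_combination cos θ * hs - sin θ * hc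
  rw [← sin_eq_zero_iff_of_lt_of_lt (abs_lt.1 hθ).1 (abs_lt.1 hθ).2]
  exact (mul_eq_zero.1 hprod).resolve_right
    (mul_cos_sq_add_mul_sin_sq_pos (sub_pos.2 hlam₂) hlam θ).ne'

end Trigonometry

lemma abs_lt_pi_div_two_of_cos_ne_zero {G : ℝ → ℝ} (hG : Continuous G) {a : ℝ}
    (ha : |G a| < π / 2) (hcos : ∀ t, cos (G t) ≠ 0) (t : ℝ) : |G t| < π / 2 := by
  by_contra! ht
  obtain ⟨y, hy, hy₀⟩ : ∃ y ∈ Set.uIcc (G a) (G t), cos y = 0 := by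
    rcases le_abs'.1 ht with h | h
    · exact ⟨-(π / 2), Set.mem_uIcc.2 (Or.inr ⟨h, by linarith [(abs_lt.1 ha).1]⟩), by simp⟩
    · exact ⟨π / 2, Set.mem_uIcc.2 (Or.inl ⟨(abs_lt.1 ha).2.le, h⟩), cos_pi_div_two⟩
  obtain ⟨s, -, rfl⟩ := intermediate_value_uIcc hG.continuousOn hy
  exact hcos s hy₀

lemma int_eq_zero_of_abs_add_two_pi_mul_lt {θ : ℝ} {k : ℤ} (hθ : θ ∈ Set.Ioc (-π) π)
    (h : |θ + 2 * π * k| < π / 2) : k = 0 := by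
  obtain ⟨h₁, h₂⟩ := abs_lt.1 h
  have hk₁ : (k : ℝ) < 1 := by nlinarith [hθ.1, pi_pos]
  have hk₂ : (-1 : ℝ) < k := by nlinarith [hθ.2, pi_pos]
  have : k < 1 := by exact_mod_cast hk₁
  have : -1 < k := by exact_mod_cast hk₂
  omega

section AngleLift

variable {lam : ℝ} {F : ℝ → ℝ}

lemma IsAngleLift.abs_sub_lt_pi_div_two (hlift : IsAngleLift lam F) (hlam : 0 < lam)
    (hF : Continuous F) (hF₀ : F 0 = 0) (θ : ℝ) : |F θ - θ| < π / 2 := by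
  refine abs_lt_pi_div_two_of_cos_ne_zero (G := fun t => F t - t) (by fun_prop) (a := 0)
    (by simp [hF₀, pi_pos]) (fun t hcos => ?_) θ
  obtain ⟨c, -, h₁, h₂⟩ := hlift t
  have := mul_cos_sub_eq h₁ h₂
  rw [hcos, mul_zero] at this
  exact (cos_sq_add_mul_sin_sq_pos hlam t).ne this

lemma IsAngleLift.eq_angleLift (hlift : IsAngleLift lam F) (hlam : 0 < lam)
    (hF : Continuous F) (hF₀ : F 0 = 0) : F = angleLift lam := by
  funext θ
  obtain ⟨c, hc, h₁, h₂⟩ := hlift θ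
  have := eq_arctan_of_mul_cos_of_mul_sin hc (hlift.abs_sub_lt_pi_div_two hlam hF hF₀ θ)
    (mul_cos_sub_eq h₁ h₂) (mul_sin_sub_eq h₁ h₂)
  rw [angleLift, ← this]
  ring

end AngleLift

lemma differentiable_angleLift {lam : ℝ} (hlam : 0 < lam) : Differentiable ℝ (angleLift lam) :=
  differentiable_id.add <| Differentiable.arctan <|
    Differentiable.div (by fun_prop) (by fun_prop) fun θ => (cos_sq_add_mul_sin_sq_pos hlam θ).ne'

lemma hasDerivAt_angleLift_zero (lam : ℝ) : HasDerivAt (angleLift lam) lam 0 := by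
  unfold angleLift
  have hN : HasDerivAt (fun t => (lam - 1) * sin t * cos t) (lam - 1) 0 := by
    simpa [mul_assoc] using ((hasDerivAt_sin 0).fun_mul (hasDerivAt_cos 0)).const_mul (lam - 1)
  have hD : HasDerivAt (fun t => cos t ^ 2 + lam * sin t ^ 2) 0 0 := by
    simpa using
      ((hasDerivAt_cos 0).fun_pow 2).fun_add (((hasDerivAt_sin 0).fun_pow 2).const_mul lam)
  simpa using (hasDerivAt_id' 0).fun_add ((hN.div hD (by simp)).arctan)

/-- for the metric `g_λ = dx² + λ²dy²`, the angle lift `F_λ` of the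
radial vector field satisfies `F_λ′(0) = λ`, and for `0 < λ < 2` the only
`θ ∈ (−π, π]` with `F_λ(θ) ≡ 2θ (mod 2π)` is `θ = 0`. -/
theorem lemon_monstar_bifurcation (lam : ℝ) (hlam : 0 < lam)
    (F : ℝ → ℝ) (hFcont : Continuous F) (hF0 : F 0 = 0)
    (hlift : ∀ θ : ℝ, ∃ c > 0,
      cos θ = c * cos (F θ) ∧ lam * sin θ = c * sin (F θ)) :
    Differentiable ℝ F ∧ deriv F 0 = lam ∧
    (lam < 2 → ∃! θ : ℝ, θ ∈ Set.Ioc (-π) π ∧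
      ∃ k : ℤ, F θ = 2 * θ + 2 * π * k) := by
  have hlift : IsAngleLift lam F := hlift
  have hF := hlift.eq_angleLift hlam hFcont hF0
  refine ⟨hF ▸ differentiable_angleLift hlam, hF ▸ (hasDerivAt_angleLift_zero lam).deriv,
    fun hlam₂ => ⟨0, ⟨⟨by linarith [pi_pos], pi_pos.le⟩, 0, by simp [hF0]⟩, ?_⟩⟩
  rintro θ ⟨hθ, k, hk⟩
  have hband := hlift.abs_sub_lt_pi_div_two hlam hFcont hF0 θ
  rw [hk, show 2 * θ + 2 * π * k - θ = θ + 2 * π * k by ring] at hband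
  obtain rfl := int_eq_zero_of_abs_add_two_pi_mul_lt hθ hband
  obtain ⟨c, -, h₁, h₂⟩ := hlift θ
  simp only [Int.cast_zero, mul_zero, add_zero] at hk hband
  rw [hk] at h₁ h₂
  exact eq_zero_of_cos_eq_mul_cos_two_mul hlam hlam₂ (hband.trans (by linarith [pi_pos])) h₁ h₂
end
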